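/- arXiv:math/9903207 — 4 statements merged into one kernel-verified Lean document; each statement's English description precedes it below -/
import Mathlib

section
/- Let p be a prime with p ≡ 1 (mod 8). If there exist integers x, y, z, not all zero, satisfying p·x⁴ − 2·y⁴ = z², then p = A² + 32·B² for some integers A and B. -/
open Zsqrtd

namespace PepinTwoAux

local notation "R" => Zsqrtd (-2)

noncomputable instance : Div (Zsqrtd (-2)) :=
  ⟨fun x y => ⟨round (((x * star y).re : ℚ) / ((y.norm : ℚ))),
               round (((x * star y).im : ℚ) / ((y.norm : ℚ)))⟩⟩

theorem div_re (x y : R) :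
    (x / y).re = round (((x * star y).re : ℚ) / ((y.norm : ℚ))) := rfl

theorem div_im (x y : R) :
    (x / y).im = round (((x * star y).im : ℚ) / ((y.norm : ℚ))) := rfl

noncomputable instance : Mod (Zsqrtd (-2)) := ⟨fun x y => x - y * (x / y)⟩

theorem mod_def (x y : R) : x % y = x - y * (x / y) := rfl

theorem norm_nonneg' (x : R) : 0 ≤ x.norm := Zsqrtd.norm_nonneg (by norm_num) x

theorem norm_eq_zero' {x : R} : x.norm = 0 ↔ x = 0 :=
  Zsqrtd.norm_eq_zero_iff (by norm_num) x

theorem norm_pos' {x : R} (hx : x ≠ 0) : 0 < x.norm :=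
  lt_of_le_of_ne (norm_nonneg' x) (fun h => hx (norm_eq_zero'.mp h.symm))

theorem round_bound (a n : ℤ) (hn : 0 < n) :
    4 * (a - n * round ((a : ℚ) / (n : ℚ))) ^ 2 ≤ n ^ 2 := by
  have hnq : (0:ℚ) < (n:ℚ) := by exact_mod_cast hn
  have h1 : |(a : ℚ) / n - round ((a : ℚ) / n)| ≤ 1 / 2 := abs_sub_round _
  set r : ℤ := round ((a : ℚ) / (n : ℚ)) with hr
  have h2 : |(a : ℚ) - n * r| ≤ (n : ℚ) / 2 := by
    have : (a : ℚ) - n * r = (n : ℚ) * ((a : ℚ) / n - r) := by field_simp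
    rw [this, abs_mul, abs_of_pos hnq]
    calc (n:ℚ) * |(a : ℚ) / n - r| ≤ (n:ℚ) * (1/2) := by
          exact mul_le_mul_of_nonneg_left h1 (le_of_lt hnq)
      _ = (n:ℚ)/2 := by ring
  have h3 : ((a : ℚ) - n * r) ^ 2 ≤ ((n:ℚ)/2) ^ 2 := by
    have := abs_nonneg ((a : ℚ) - n * r)
    nlinarith [sq_abs ((a : ℚ) - n * r)]
  have h4 : (4 : ℚ) * ((a : ℚ) - n * r) ^ 2 ≤ (n:ℚ) ^ 2 := by nlinarith
  have : ((4 * (a - n * r) ^ 2 : ℤ) : ℚ) ≤ ((n ^ 2 : ℤ) : ℚ) := by push_cast; push_cast at h4; linarith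
  exact_mod_cast this

theorem norm_mod_lt' (x : R) {y : R} (hy : y ≠ 0) : (x % y).norm < y.norm := by
  have hn : 0 < y.norm := norm_pos' hy
  set n : ℤ := y.norm with hndef
  set w : R := x * star y with hw
  set q : R := x / y with hq
  have key : (x % y) * star y = w - (n : R) * q := by
    have hys : (n : R) = y * star y := Zsqrtd.norm_eq_mul_conj y
    rw [mod_def, hys, hw, hq]
    ring
  have hre : (w - (n : R) * q).re = w.re - n * q.re := by
    simp [Zsqrtd.re_sub, Zsqrtd.re_smul]
  have him : (w - (n : R) * q).im = w.im - n * q.im := by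
    simp [Zsqrtd.im_sub, Zsqrtd.im_smul]
  have hnorm : ((x % y) * star y).norm = (w.re - n * q.re)^2 + 2 * (w.im - n * q.im)^2 := by
    rw [key, Zsqrtd.norm_def, hre, him]; ring
  have hbre : 4 * (w.re - n * q.re) ^ 2 ≤ n ^ 2 := by
    have := round_bound w.re n hn
    rwa [← div_re x y] at this
  have hbim : 4 * (w.im - n * q.im) ^ 2 ≤ n ^ 2 := by
    have := round_bound w.im n hn
    rwa [← div_im x y] at this
  have hlt : ((x % y) * star y).norm < n ^ 2 := by
    rw [hnorm]; nlinarith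
  have hmul : ((x % y) * star y).norm = (x % y).norm * n := by
    rw [Zsqrtd.norm_mul, Zsqrtd.norm_conj]
  rw [hmul] at hlt
  have : (x % y).norm * n < n * n := by nlinarith
  exact lt_of_mul_lt_mul_right this (le_of_lt hn)

noncomputable instance : EuclideanDomain (Zsqrtd (-2)) :=
  { Zsqrtd.commRing, Zsqrtd.nontrivial with
    quotient := (· / ·)
    remainder := (· % ·)
    quotient_zero := fun x => by
      show (x / 0 : R) = 0
      have : (x / 0 : R) = ⟨0, 0⟩ := by
        ext <;> simp [div_re, div_im]
      rw [this]; rfl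
    quotient_mul_add_remainder_eq := fun a b => by
      show b * (a / b) + a % b = a
      rw [mod_def]; ring
    r := fun a b => a.norm.natAbs < b.norm.natAbs
    r_wellFounded := (measure (fun (x : R) => x.norm.natAbs)).wf
    remainder_lt := fun a b hb => by
      show (a % b).norm.natAbs < b.norm.natAbs
      have := norm_mod_lt' a hb
      have h1 := norm_nonneg' (a % b)
      have h2 := norm_nonneg' b
      omega
    mul_left_not_lt := fun a b hb0 => by
      rw [not_lt, Zsqrtd.norm_mul, Int.natAbs_mul]
      have : 1 ≤ b.norm.natAbs := by
        have := norm_pos' hb0; omega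
      exact Nat.le_mul_of_pos_right _ (by omega)  }




set_option synthInstance.maxHeartbeats 1000000
set_option maxHeartbeats 1000000

theorem norm_explicit (x : R) : x.norm = x.re ^ 2 + 2 * x.im ^ 2 := by
  rw [Zsqrtd.norm_def]; ring

theorem unit_eq {u : R} (hu : IsUnit u) : u = 1 ∨ u = -1 := by
  have h1 : u.norm = 1 := (Zsqrtd.norm_eq_one_iff' (by norm_num) u).mpr hu
  rw [norm_explicit] at h1
  have h5 : u.im ^ 2 < 1 := by nlinarith [sq_nonneg u.re]
  have h6 := sq_nonneg u.im
  have him2 : u.im ^ 2 = 0 := le_antisymm (by omega) h6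
  have him : u.im = 0 := pow_eq_zero_iff two_ne_zero |>.mp him2
  have hre2 : u.re ^ 2 = 1 := by rw [him] at h1; linarith
  have hre : u.re = 1 ∨ u.re = -1 :=
    Int.isUnit_iff.mp (IsUnit.of_mul_eq_one u.re (by linear_combination hre2))
  rcases hre with h | h
  · left; ext <;> simp [h, him]
  · right; ext <;> simp [h, him]

theorem norm_dvd_norm {a b : R} (h : a ∣ b) : a.norm ∣ b.norm := by
  obtain ⟨c, rfl⟩ := h; rw [Zsqrtd.norm_mul]; exact Dvd.intro _ rfl

theorem prime_of_norm_prime {π : R} (h : Prime π.norm) : Prime π := by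
  rw [← irreducible_iff_prime]
  constructor
  · intro hu
    exact h.not_unit ((Zsqrtd.isUnit_iff_norm_isUnit π).mp hu)
  · intro a b hab
    have hn : π.norm = a.norm * b.norm := by rw [hab, Zsqrtd.norm_mul]
    rcases h.irreducible.isUnit_or_isUnit hn with h' | h'
    · exact Or.inl ((Zsqrtd.isUnit_iff_norm_isUnit a).mpr h')
    · exact Or.inr ((Zsqrtd.isUnit_iff_norm_isUnit b).mpr h')

theorem isCoprime_of_common_div {a b : R} (h : ∀ δ : R, δ ∣ a → δ ∣ b → IsUnit δ) :
    IsCoprime a b :=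
  (EuclideanDomain.gcd_isUnit_iff).mp
    (h _ (EuclideanDomain.gcd_dvd_left a b) (EuclideanDomain.gcd_dvd_right a b))

theorem norm_pow (a : R) (k : ℕ) : (a ^ k).norm = a.norm ^ k := by
  induction k with
  | zero => simp [Zsqrtd.norm_one]
  | succ n ih => rw [pow_succ, pow_succ, Zsqrtd.norm_mul, ih]

/-- Existence of a representation `p = c² + 2e²`. -/
theorem exists_rep (p : ℕ) (hp : p.Prime) (hp8 : p % 8 = 1) :
    ∃ c e : ℤ, c ^ 2 + 2 * e ^ 2 = (p : ℤ) := by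
  haveI : Fact p.Prime := ⟨hp⟩
  have hp2 : p ≠ 2 := by rintro rfl; norm_num at hp8
  have hs2 : IsSquare (2 : ZMod p) :=
    (ZMod.exists_sq_eq_two_iff hp2).mpr (Or.inl hp8)
  have hp4 : p % 4 = 1 := by
    have : p % 8 % 4 = p % 4 := Nat.mod_mod_of_dvd p (by norm_num)
    omega
  have hs1 : IsSquare (-1 : ZMod p) := ZMod.exists_sq_eq_neg_one_iff.mpr (by omega)
  obtain ⟨r, hr⟩ := hs1
  obtain ⟨s, hs⟩ := hs2
  obtain ⟨m, hm⟩ : ∃ m : ZMod p, (-2 : ZMod p) = m * m :=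
    ⟨r * s, by rw [show (-2 : ZMod p) = (-1) * 2 by ring, hr, hs]; ring⟩
  set n : ℤ := (m.val : ℤ) with hn
  have hdvd : (p : ℤ) ∣ n ^ 2 + 2 := by
    rw [← ZMod.intCast_zmod_eq_zero_iff_dvd]
    push_cast
    have hcast : ((m.val : ℤ) : ZMod p) = m := by
      push_cast
      rw [ZMod.natCast_val, ZMod.cast_id]
    rw [hcast]
    linear_combination -hm
  -- p is not irreducible in R
  have hirr : ¬ Irreducible ((p : ℤ) : R) := by
    intro hi
    have hprime : Prime ((p : ℤ) : R) := irreducible_iff_prime.mp hi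
    have hmul : (⟨n, 1⟩ * ⟨n, -1⟩ : R) = (⟨n ^ 2 + 2, 0⟩ : R) := by
      ext <;> (simp [Zsqrtd.re_mul, Zsqrtd.im_mul]; try ring)
    have hdvd2 : ((p : ℤ) : R) ∣ (⟨n, 1⟩ * ⟨n, -1⟩ : R) := by
      rw [hmul]
      exact (Zsqrtd.intCast_dvd _ _).mpr ⟨hdvd, dvd_zero _⟩
    have hple : (2 : ℤ) ≤ (p : ℤ) := by exact_mod_cast hp.two_le
    rcases hprime.2.2 _ _ hdvd2 with h | h
    · have h1 : (p : ℤ) ∣ 1 := ((Zsqrtd.intCast_dvd _ _).mp h).2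
      have := Int.le_of_dvd one_pos h1
      omega
    · have h1 : (p : ℤ) ∣ -1 := ((Zsqrtd.intCast_dvd _ _).mp h).2
      rw [dvd_neg] at h1
      have := Int.le_of_dvd one_pos h1
      omega
  -- hence p factors with a factor of norm p
  have hpu : ¬ IsUnit ((p : ℤ) : R) := by
    intro hu
    have h1 : ((p : ℤ) : R).norm.natAbs = 1 := Zsqrtd.norm_eq_one_iff.mpr hu
    rw [Zsqrtd.norm_intCast] at h1
    have := hp.two_le
    simp [Int.natAbs_mul] at h1
    omega
  have hab : ∃ a b : R, ((p : ℤ) : R) = a * b ∧ ¬IsUnit a ∧ ¬IsUnit b := by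
    simpa only [irreducible_iff, hpu, true_and, not_forall, not_or, exists_prop,
      not_false_iff] using hirr
  obtain ⟨a, b, hpab, hau, hbu⟩ := hab
  have hnorms : a.norm.natAbs * b.norm.natAbs = p ^ 2 := by
    have h2 : (p : ℤ) * (p : ℤ) = a.norm * b.norm := by
      rw [← Zsqrtd.norm_intCast (p : ℤ), hpab, Zsqrtd.norm_mul]
    have h3 := congrArg Int.natAbs h2
    rw [Int.natAbs_mul, Int.natAbs_mul] at h3
    simp only [Int.natAbs_natCast] at h3
    rw [← h3]
    simp [sq]
  have hna : a.norm.natAbs = p :=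
    ((hp.mul_eq_prime_sq_iff (mt Zsqrtd.norm_eq_one_iff.mp hau)
      (mt Zsqrtd.norm_eq_one_iff.mp hbu)).mp hnorms).1
  refine ⟨a.re, a.im, ?_⟩
  have hfin : a.norm = (p : ℤ) := by
    rw [← Int.natAbs_of_nonneg (norm_nonneg' a), hna]
  rw [← hfin, norm_explicit]


theorem dec0 : ∀ u : ZMod 16, (2 * u) ^ 4 = 0 := by decide
theorem dec1 : ∀ z v : ZMod 16, z ^ 2 + 2 * (2 * v + 1) ^ 4 ≠ 0 := by decide
theorem dec2 : ∀ z u v : ZMod 8, z ^ 2 - (2 * u + 1) ^ 4 + 2 * (2 * v + 1) ^ 4 ≠ 0 := by decide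
theorem dec3 : ∀ w u v : ZMod 8, (2 * w) ^ 2 - (2 * u + 1) ^ 4 + 2 * (2 * v) ^ 4 ≠ 0 := by decide
theorem dec4 : ∀ (y c e k b : ZMod 4),
    (2 * y) ^ 2 = c * (4 * (2 * k + 1) * b * ((2 * k + 1) ^ 2 - 2 * b ^ 2))
      + e * (((2 * k + 1) ^ 2 - 2 * b ^ 2) ^ 2 - 8 * (2 * k + 1) ^ 2 * b ^ 2) → e = 0 := by
  decide

theorem pow4_eq (a b : ℤ) : (⟨a, b⟩ : R) ^ 4 =
    ⟨(a ^ 2 - 2 * b ^ 2) ^ 2 - 8 * a ^ 2 * b ^ 2, 4 * a * b * (a ^ 2 - 2 * b ^ 2)⟩ := by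
  have h2 : (⟨a, b⟩ : R) ^ 2 = ⟨a ^ 2 - 2 * b ^ 2, 2 * a * b⟩ := by
    rw [pow_two]; ext <;> (simp [Zsqrtd.re_mul, Zsqrtd.im_mul]; try ring)
  rw [show (4 : ℕ) = 2 * 2 from rfl, pow_mul, h2, pow_two]
  ext <;> (simp [Zsqrtd.re_mul, Zsqrtd.im_mul]; try ring)

/-- The final descent step: given the coprime solution and a representation
`p = c² + 2e²` with `⟨c, e⟩` dividing `⟨z1, y1²⟩`, we get `4 ∣ e`. -/
theorem final_step (p : ℕ) (hp : p.Prime) (x1 y1 z1 c e : ℤ)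
    (hx1odd : Odd x1) (hy1even : Even y1)
    (heq1 : (p : ℤ) * x1 ^ 4 - 2 * y1 ^ 4 = z1 ^ 2)
    (hce : c ^ 2 + 2 * e ^ 2 = (p : ℤ))
    (hkey : ∀ δ : R, δ ∣ (⟨z1, y1 ^ 2⟩ : R) → δ ∣ star (⟨z1, y1 ^ 2⟩ : R) → IsUnit δ)
    (hdvd : (⟨c, e⟩ : R) ∣ (⟨z1, y1 ^ 2⟩ : R)) :
    ∃ A B : ℤ, (p : ℤ) = A ^ 2 + 32 * B ^ 2 := by
  obtain ⟨μ, hμ⟩ := hdvd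
  have hpne : (p : ℤ) ≠ 0 := by exact_mod_cast hp.pos.ne'
  have hγnorm : (⟨z1, y1 ^ 2⟩ : R).norm = (p : ℤ) * x1 ^ 4 := by
    have h0 : (⟨z1, y1 ^ 2⟩ : R).norm = z1 ^ 2 + 2 * (y1 ^ 2) ^ 2 := by rw [norm_explicit]
    rw [h0]; linear_combination -heq1
  have hπnorm : (⟨c, e⟩ : R).norm = (p : ℤ) := by rw [norm_explicit]; exact hce
  have hμnorm : μ.norm = x1 ^ 4 := by
    have h1 : (p : ℤ) * x1 ^ 4 = (p : ℤ) * μ.norm := by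
      rw [← hγnorm, hμ, Zsqrtd.norm_mul, hπnorm]
    exact (mul_left_cancel₀ hpne h1).symm
  have hμcop : IsCoprime μ (star μ) := by
    apply isCoprime_of_common_div
    intro δ h1 h2
    refine hkey δ (h1.trans ⟨⟨c, e⟩, by rw [hμ]; ring⟩) (h2.trans ?_)
    exact ⟨star ⟨c, e⟩, by rw [hμ, star_mul']; ring⟩
  have hμmul : μ * star μ = ((x1 : ℤ) : R) ^ 4 := by
    have h3 := (Zsqrtd.norm_eq_mul_conj μ).symm
    rw [hμnorm] at h3
    rw [h3]; push_cast; ring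
  obtain ⟨α, u, hu⟩ := exists_associated_pow_of_mul_eq_pow' hμcop hμmul
  -- α has odd norm, hence odd real part
  have hαodd : Odd α.norm := by
    have h2 : α.norm ^ 4 * ((u : R)).norm = x1 ^ 4 := by
      rw [← norm_pow, ← Zsqrtd.norm_mul, hu, hμnorm]
    have hun : ((u : R)).norm = 1 := (Zsqrtd.norm_eq_one_iff' (by norm_num) _).mpr u.isUnit
    rw [hun, mul_one] at h2
    have h4 : Odd (α.norm ^ 4) := by rw [h2]; exact hx1odd.pow
    exact (Int.odd_pow' (by norm_num)).mp h4
  have hare : Odd α.re := by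
    rcases Int.even_or_odd α.re with he | ho
    · exfalso
      obtain ⟨t, ht⟩ := he
      have : Even α.norm := ⟨2 * t ^ 2 + α.im ^ 2, by rw [norm_explicit, ht]; ring⟩
      exact (Int.not_odd_iff_even.mpr this) hαodd
    · exact ho
  obtain ⟨a, b⟩ := α
  obtain ⟨k, hk⟩ := hare
  obtain ⟨y2, hy2⟩ := hy1even
  rcases unit_eq u.isUnit with h1 | h1
  · have hγ2 : (⟨z1, y1 ^ 2⟩ : R) = (⟨c, e⟩ : R) * (⟨a, b⟩ : R) ^ 4 := by
      rw [hμ, ← hu, h1, mul_one]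
    rw [pow4_eq] at hγ2
    have him : y1 ^ 2 = c * (4 * a * b * (a ^ 2 - 2 * b ^ 2))
        + e * ((a ^ 2 - 2 * b ^ 2) ^ 2 - 8 * a ^ 2 * b ^ 2) := by
      have h5 := congrArg Zsqrtd.im hγ2
      simp only [Zsqrtd.im_mul] at h5
      exact h5
    have hk' : a = 2 * k + 1 := hk
    rw [hk', hy2] at him
    have him4 := congrArg (fun t : ℤ => (t : ZMod 4)) him
    push_cast at him4
    have he4 : ((e : ZMod 4)) = 0 :=
      dec4 (y2 : ZMod 4) (c : ZMod 4) (e : ZMod 4) (k : ZMod 4) (b : ZMod 4)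
        (by linear_combination him4)
    obtain ⟨B, hB⟩ := (ZMod.intCast_zmod_eq_zero_iff_dvd e 4).mp he4
    exact ⟨c, B, by rw [← hce, hB]; ring⟩
  · have hγ2 : (⟨z1, y1 ^ 2⟩ : R) = -((⟨c, e⟩ : R) * (⟨a, b⟩ : R) ^ 4) := by
      rw [hμ, ← hu, h1]; ring
    rw [pow4_eq] at hγ2
    have him : y1 ^ 2 = -(c * (4 * a * b * (a ^ 2 - 2 * b ^ 2))
        + e * ((a ^ 2 - 2 * b ^ 2) ^ 2 - 8 * a ^ 2 * b ^ 2)) := by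
      have h5 := congrArg Zsqrtd.im hγ2
      simp only [Zsqrtd.im_neg, Zsqrtd.im_mul] at h5
      linarith [h5]
    have hk' : a = 2 * k + 1 := hk
    rw [hk', hy2] at him
    have him4 := congrArg (fun t : ℤ => (t : ZMod 4)) him
    push_cast at him4
    have he4 : ((e : ℤ) : ZMod 4) = 0 := by
      have h6 := dec4 (y2 : ZMod 4) (-(c : ZMod 4)) (-(e : ZMod 4)) (k : ZMod 4) (b : ZMod 4)
        (by linear_combination him4)
      exact neg_eq_zero.mp h6
    obtain ⟨B, hB⟩ := (ZMod.intCast_zmod_eq_zero_iff_dvd e 4).mp he4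
    exact ⟨c, B, by rw [← hce, hB]; ring⟩
/-- The common-divisor lemma for `γ = ⟨z1, y1²⟩`. -/
theorem key_lemma (p : ℕ) (hp : p.Prime) (x1 y1 z1 : ℤ)
    (hpodd : Odd (p : ℤ)) (hx1odd : Odd x1)
    (heq1 : (p : ℤ) * x1 ^ 4 - 2 * y1 ^ 4 = z1 ^ 2)
    (hzy : IsCoprime z1 y1) :
    ∀ δ : R, δ ∣ (⟨z1, y1 ^ 2⟩ : R) → δ ∣ star (⟨z1, y1 ^ 2⟩ : R) → IsUnit δ := by
  intro δ h1 h2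
  have hγnorm : (⟨z1, y1 ^ 2⟩ : R).norm = (p : ℤ) * x1 ^ 4 := by
    have h0 : (⟨z1, y1 ^ 2⟩ : R).norm = z1 ^ 2 + 2 * (y1 ^ 2) ^ 2 := by rw [norm_explicit]
    rw [h0]; linear_combination -heq1
  have hd0 : δ.norm ∣ (p : ℤ) * x1 ^ 4 := by
    rw [← hγnorm]; exact norm_dvd_norm h1
  have hsum : (⟨z1, y1 ^ 2⟩ : R) + star (⟨z1, y1 ^ 2⟩ : R) = ((2 * z1 : ℤ) : R) := by
    ext <;> simp [Zsqrtd.re_star, Zsqrtd.im_star, Zsqrtd.re_intCast, Zsqrtd.im_intCast] <;> ring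
  have hdiff : (⟨z1, y1 ^ 2⟩ : R) - star (⟨z1, y1 ^ 2⟩ : R) = (⟨0, 2 * y1 ^ 2⟩ : R) := by
    ext <;> simp [Zsqrtd.re_star, Zsqrtd.im_star] <;> ring
  have hd1 : δ.norm ∣ 2 ^ 2 * z1 ^ 2 := by
    have h3 := norm_dvd_norm (dvd_add h1 h2)
    rw [hsum, Zsqrtd.norm_intCast] at h3
    have h4 : δ.norm ∣ 2 ^ 2 * z1 ^ 2 := by
      convert h3 using 1; ring
    exact h4
  have hd2 : δ.norm ∣ 2 ^ 3 * y1 ^ 4 := by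
    have h3 := norm_dvd_norm (dvd_sub h1 h2)
    rw [hdiff] at h3
    have h4 : (⟨0, 2 * y1 ^ 2⟩ : R).norm = 2 ^ 3 * y1 ^ 4 := by
      rw [norm_explicit]
      show (0 : ℤ) ^ 2 + 2 * (2 * y1 ^ 2) ^ 2 = 2 ^ 3 * y1 ^ 4
      ring
    rwa [h4] at h3
  -- δ.norm is odd
  have hodd : ¬ (2 : ℤ) ∣ δ.norm := by
    intro h2d
    have : (2 : ℤ) ∣ (p : ℤ) * x1 ^ 4 := h2d.trans hd0
    have hoddpx : Odd ((p : ℤ) * x1 ^ 4) := hpodd.mul hx1odd.pow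
    rw [← Int.not_even_iff_odd] at hoddpx
    exact hoddpx (even_iff_two_dvd.mpr this)
  have hcop2 : IsCoprime δ.norm (2 : ℤ) :=
    ((Int.prime_two.coprime_iff_not_dvd).mpr hodd).symm
  have hdz : δ.norm ∣ z1 ^ 2 := (hcop2.pow_right (n := 2)).dvd_of_dvd_mul_left hd1
  have hdy : δ.norm ∣ y1 ^ 4 := (hcop2.pow_right (n := 3)).dvd_of_dvd_mul_left hd2
  have hunit : IsUnit δ.norm := (hzy.pow).isUnit_of_dvd' hdz hdy
  have hpos : 0 ≤ δ.norm := norm_nonneg' δ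
  have h1' : δ.norm = 1 := by
    rcases Int.isUnit_iff.mp hunit with h | h
    · exact h
    · omega
  exact (Zsqrtd.norm_eq_one_iff' (by norm_num) δ).mp h1'

end PepinTwoAux

open PepinTwoAux in
/-- If `p ≡ 1 (mod 8)` is prime and `p·x⁴ − 2·y⁴ = z²` has a nontrivial
integral solution, then `p = A² + 32B²` for some integers `A`, `B`. -/
theorem pepin_two (p : ℕ) (hp : p.Prime) (hp8 : p % 8 = 1)
    (hsol : ∃ x y z : ℤ, (x, y, z) ≠ (0, 0, 0) ∧
      (p : ℤ) * x ^ 4 - 2 * y ^ 4 = z ^ 2) :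
    ∃ A B : ℤ, (p : ℤ) = A ^ 2 + 32 * B ^ 2 := by
  obtain ⟨x, y, z, hnt, heq⟩ := hsol
  -- basic facts about p
  have hpodd : Odd (p : ℤ) := by
    rw [Int.odd_coe_nat, Nat.odd_iff]; omega
  have hp81 : ((p : ℕ) : ZMod 8) = 1 := by
    rw [← ZMod.natCast_mod p 8, hp8, Nat.cast_one]
  -- reduction to a coprime solution
  have hxy0 : ¬ (x = 0 ∧ y = 0) := by
    rintro ⟨rfl, rfl⟩
    have hz2 : z ^ 2 = 0 := by rw [← heq]; ring
    have hz : z = 0 := pow_eq_zero_iff two_ne_zero |>.mp hz2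
    exact hnt (by rw [hz])
  set g : ℕ := Int.gcd x y with hg
  have hg0 : g ≠ 0 := fun h => hxy0 (Int.gcd_eq_zero_iff.mp h)
  have hgz : (g : ℤ) ≠ 0 := by exact_mod_cast hg0
  obtain ⟨x1, hx1⟩ : (g : ℤ) ∣ x := Int.gcd_dvd_left _ _
  obtain ⟨y1, hy1⟩ : (g : ℤ) ∣ y := Int.gcd_dvd_right _ _
  have hcop : IsCoprime x1 y1 := by
    rw [Int.isCoprime_iff_gcd_eq_one]
    have h5 : g * Int.gcd x1 y1 = g * 1 := by
      rw [mul_one, hg]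
      conv_rhs => rw [hx1, hy1]
      rw [Int.gcd_mul_left]
      simp
      exact Or.inl hg.symm
    exact Nat.eq_of_mul_eq_mul_left (Nat.pos_of_ne_zero hg0) h5
  have hdvd4 : ((g : ℤ) ^ 2) ^ 2 ∣ z ^ 2 :=
    ⟨(p : ℤ) * x1 ^ 4 - 2 * y1 ^ 4, by rw [← heq, hx1, hy1]; ring⟩
  obtain ⟨z1, hz1⟩ : (g : ℤ) ^ 2 ∣ z := (Int.pow_dvd_pow_iff two_ne_zero).mp hdvd4
  have heq1 : (p : ℤ) * x1 ^ 4 - 2 * y1 ^ 4 = z1 ^ 2 := by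
    apply mul_left_cancel₀ (pow_ne_zero 4 hgz)
    have h6 := heq
    rw [hx1, hy1, hz1] at h6
    linear_combination h6
  clear heq hnt hxy0 hdvd4 hx1 hy1 hz1
  -- parity facts
  have hx1odd : Odd x1 := by
    rw [← Int.not_even_iff_odd]
    intro he
    obtain ⟨u, hu⟩ := he
    have hy1odd : Odd y1 := by
      rw [← Int.not_even_iff_odd]
      intro hye
      obtain ⟨v, hv⟩ := hye
      have h2x : (2 : ℤ) ∣ x1 := ⟨u, by linarith [hu]⟩
      have h2y : (2 : ℤ) ∣ y1 := ⟨v, by linarith [hv]⟩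
      have := hcop.isUnit_of_dvd' h2x h2y
      rcases Int.isUnit_iff.mp this with h | h <;> norm_num at h
    obtain ⟨v, hv⟩ := hy1odd
    rw [hu, hv] at heq1
    have hc := congrArg (fun t : ℤ => (t : ZMod 16)) heq1
    push_cast at hc
    exact dec1 (z1 : ZMod 16) (v : ZMod 16)
      (by linear_combination -hc + ((p : ℕ) : ZMod 16) * dec0 (u : ZMod 16))
  have hy1even : Even y1 := by
    rw [← Int.not_odd_iff_even]
    intro ho
    obtain ⟨v, hv⟩ := ho
    obtain ⟨u, hu⟩ := hx1odd
    rw [hu, hv] at heq1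
    have hc := congrArg (fun t : ℤ => (t : ZMod 8)) heq1
    push_cast at hc
    exact dec2 (z1 : ZMod 8) (u : ZMod 8) (v : ZMod 8)
      (by linear_combination -hc + (2 * (u : ZMod 8) + 1) ^ 4 * hp81)
  -- z1 and y1 are coprime
  have hzy : IsCoprime z1 y1 := by
    rw [Int.isCoprime_iff_gcd_eq_one]
    by_contra hne
    obtain ⟨ℓ, hℓp, hℓd⟩ := Nat.exists_prime_and_dvd hne
    have hℓz : (ℓ : ℤ) ∣ z1 :=
      (Int.natCast_dvd_natCast.mpr hℓd).trans (Int.gcd_dvd_left _ _)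
    have hℓy : (ℓ : ℤ) ∣ y1 :=
      (Int.natCast_dvd_natCast.mpr hℓd).trans (Int.gcd_dvd_right _ _)
    have hℓprime : Prime (ℓ : ℤ) := Nat.prime_iff_prime_int.mp hℓp
    have hℓpx : (ℓ : ℤ) ∣ (p : ℤ) * x1 ^ 4 := by
      rw [show (p : ℤ) * x1 ^ 4 = z1 ^ 2 + 2 * y1 ^ 4 by linarith [heq1]]
      exact dvd_add (dvd_pow hℓz two_ne_zero) ((dvd_pow hℓy (by norm_num)).mul_left 2)
    rcases hℓprime.2.2 _ _ hℓpx with h | h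
    · -- ℓ = p
      have hℓeqp : ℓ = p := (Nat.prime_dvd_prime_iff_eq hℓp hp).mp (Int.natCast_dvd_natCast.mp h)
      subst hℓeqp
      have hp2 : ((ℓ : ℤ)) ^ 2 ∣ (ℓ : ℤ) * x1 ^ 4 := by
        rw [show ((ℓ : ℕ) : ℤ) * x1 ^ 4 = z1 ^ 2 + 2 * y1 ^ 4 by linarith [heq1]]
        apply dvd_add
        · exact pow_dvd_pow_of_dvd hℓz 2
        · exact ((pow_dvd_pow_of_dvd hℓy 2).trans (pow_dvd_pow y1 (by norm_num))).mul_left 2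
      obtain ⟨t, ht⟩ := hp2
      have hxx : x1 ^ 4 = (ℓ : ℤ) * t := by
        apply mul_left_cancel₀ hℓprime.ne_zero
        rw [ht]; ring
      have hℓx : (ℓ : ℤ) ∣ x1 := hℓprime.dvd_of_dvd_pow ⟨t, hxx⟩
      exact hℓprime.not_unit (hcop.isUnit_of_dvd' hℓx hℓy)
    · have hℓx : (ℓ : ℤ) ∣ x1 := hℓprime.dvd_of_dvd_pow h
      exact hℓprime.not_unit (hcop.isUnit_of_dvd' hℓx hℓy)
  -- z1 is odd
  have hz1odd : Odd z1 := by
    rw [← Int.not_even_iff_odd]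
    intro he
    obtain ⟨w, hw⟩ := he
    obtain ⟨u, hu⟩ := hx1odd
    obtain ⟨v, hv⟩ := hy1even
    rw [hu, hv, hw] at heq1
    have hc := congrArg (fun t : ℤ => (t : ZMod 8)) heq1
    push_cast at hc
    exact dec3 (w : ZMod 8) (u : ZMod 8) (v : ZMod 8)
      (by linear_combination -hc + (2 * (u : ZMod 8) + 1) ^ 4 * hp81)
  -- representation p = c² + 2e² and the dividing prime
  obtain ⟨c, e, hce⟩ := exists_rep p hp hp8
  have hkey := key_lemma p hp x1 y1 z1 hpodd hx1odd heq1 hzy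
  have hγnorm : (⟨z1, y1 ^ 2⟩ : Zsqrtd (-2)).norm = (p : ℤ) * x1 ^ 4 := by
    have h0 : (⟨z1, y1 ^ 2⟩ : Zsqrtd (-2)).norm = z1 ^ 2 + 2 * (y1 ^ 2) ^ 2 := by rw [norm_explicit]
    rw [h0]; linear_combination -heq1
  have hπnorm : (⟨c, e⟩ : Zsqrtd (-2)).norm = (p : ℤ) := by rw [norm_explicit]; exact hce
  have hπprime : Prime ((⟨c, e⟩ : Zsqrtd (-2))) := by
    apply prime_of_norm_prime
    rw [hπnorm]
    exact Nat.prime_iff_prime_int.mp hp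
  have hπdvd : (⟨c, e⟩ : Zsqrtd (-2)) ∣ (⟨z1, y1 ^ 2⟩ : Zsqrtd (-2)) * star (⟨z1, y1 ^ 2⟩ : Zsqrtd (-2)) := by
    have h7 : (⟨z1, y1 ^ 2⟩ : Zsqrtd (-2)) * star (⟨z1, y1 ^ 2⟩ : Zsqrtd (-2)) =
        (⟨c, e⟩ : Zsqrtd (-2)) * star (⟨c, e⟩ : Zsqrtd (-2)) * ((x1 : ℤ) : Zsqrtd (-2)) ^ 4 := by
      rw [← Zsqrtd.norm_eq_mul_conj, ← Zsqrtd.norm_eq_mul_conj, hγnorm, hπnorm]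
      push_cast
      ring
    rw [h7]
    exact ⟨star (⟨c, e⟩ : Zsqrtd (-2)) * ((x1 : ℤ) : Zsqrtd (-2)) ^ 4, by ring⟩
  rcases hπprime.2.2 _ _ hπdvd with h | h
  · exact final_step p hp x1 y1 z1 c e hx1odd hy1even heq1 hce hkey h
  · -- star case : use ⟨c, -e⟩
    have hstar : (⟨c, -e⟩ : Zsqrtd (-2)) ∣ (⟨z1, y1 ^ 2⟩ : Zsqrtd (-2)) := by
      obtain ⟨t, ht⟩ := h
      refine ⟨star t, ?_⟩
      have h8 := congrArg star ht
      rw [star_star, star_mul'] at h8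
      exact h8
    have hkey' := hkey
    exact final_step p hp x1 y1 z1 c (-e) hx1odd hy1even heq1
      (by linear_combination hce) hkey hstar
end

section
/- There are no integers x, y, z, not all zero, satisfying x⁴ − 17·y⁴ = −2·z². -/
set_option synthInstance.maxHeartbeats 1000000
set_option maxHeartbeats 1000000

namespace LR

local notation "R" => Zsqrtd (-2)

def divR (x y : R) : R :=
  ⟨round ((x * star y).re / y.norm : ℚ), round ((x * star y).im / y.norm : ℚ)⟩

def modR (x y : R) : R := x - y * divR x y

theorem normR_pos {y : R} (hy : y ≠ 0) : 0 < y.norm :=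
  lt_of_le_of_ne (Zsqrtd.norm_nonneg (by norm_num) y)
    (fun h => hy ((Zsqrtd.norm_eq_zero_iff (by norm_num) y).1 h.symm))

theorem round_close (u N : ℤ) (hN : 0 < N) : 2 * |u - round ((u:ℚ)/N) * N| ≤ N := by
  have hN' : (0:ℚ) < N := by exact_mod_cast hN
  have h1 : |(u:ℚ)/N - round ((u:ℚ)/N)| ≤ 1/2 := abs_sub_round _
  have key : 2 * |(u:ℚ) - (round ((u:ℚ)/N) : ℤ) * N| ≤ N := by
    have habs : |(u:ℚ) - (round ((u:ℚ)/N) : ℤ) * N| = |(u:ℚ)/N - round ((u:ℚ)/N)| * N := by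
      rw [show ((u:ℚ) - (round ((u:ℚ)/N) : ℤ) * N) = ((u:ℚ)/N - round ((u:ℚ)/N)) * N from by
        field_simp, abs_mul, abs_of_pos hN']
    rw [habs]
    nlinarith [h1]
  have h5 : ((2 * |u - round ((u:ℚ)/N) * N| : ℤ) : ℚ) ≤ ((N:ℤ) : ℚ) := by
    push_cast
    convert key using 2
  exact_mod_cast h5

theorem key_identity (x y q : R) :
    (x - y * q).norm * y.norm =
      ((x * star y).re - q.re * y.norm)^2 + 2 * ((x * star y).im - q.im * y.norm)^2 := by
  obtain ⟨x1, x2⟩ := x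
  obtain ⟨y1, y2⟩ := y
  obtain ⟨q1, q2⟩ := q
  simp only [Zsqrtd.norm_def, Zsqrtd.re_mul, Zsqrtd.im_mul, Zsqrtd.re_sub, Zsqrtd.im_sub,
    Zsqrtd.re_star, Zsqrtd.im_star]
  ring

theorem norm_modR_lt (x : R) {y : R} (hy : y ≠ 0) : (modR x y).norm < y.norm := by
  have hN := normR_pos hy
  have ha := round_close (x * star y).re y.norm hN
  have hb := round_close (x * star y).im y.norm hN
  have key := key_identity x y (divR x y)
  rw [show (divR x y).re = round (((x * star y).re : ℚ)/ y.norm) from rfl,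
    show (divR x y).im = round (((x * star y).im : ℚ)/ y.norm) from rfl] at key
  rw [show modR x y = x - y * divR x y from rfl]
  set N := y.norm
  set a := (x * star y).re - round (((x * star y).re : ℚ)/N) * N
  set b := (x * star y).im - round (((x * star y).im : ℚ)/N) * N
  have h4a : 4 * a^2 ≤ N^2 := by nlinarith [sq_abs a, abs_nonneg a]
  have h4b : 4 * b^2 ≤ N^2 := by nlinarith [sq_abs b, abs_nonneg b]
  nlinarith [key, hN]

theorem natAbs_norm_modR_lt (a : R) {b : R} (hb : b ≠ 0) :
    (modR a b).norm.natAbs < b.norm.natAbs := by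
  have h := norm_modR_lt a hb
  have h1 := Zsqrtd.norm_nonneg (show (-2:ℤ) ≤ 0 by norm_num) (modR a b)
  have h2 := Zsqrtd.norm_nonneg (show (-2:ℤ) ≤ 0 by norm_num) b
  omega

theorem natAbs_norm_le_mul_left (a : R) {b : R} (hb0 : b ≠ 0) :
    (Zsqrtd.norm a).natAbs ≤ (Zsqrtd.norm (a * b)).natAbs := by
  rw [Zsqrtd.norm_mul, Int.natAbs_mul]
  have := normR_pos hb0
  have h1 := Zsqrtd.norm_nonneg (show (-2:ℤ) ≤ 0 by norm_num) a
  refine le_mul_of_one_le_right (Nat.zero_le _) ?_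
  omega

instance : EuclideanDomain R :=
  { Zsqrtd.commRing, Zsqrtd.nontrivial with
    quotient := divR
    remainder := modR
    quotient_zero := fun x => by
      simp only [divR, Zsqrtd.norm_def]
      norm_num
      rfl
    quotient_mul_add_remainder_eq := fun a b => by
      simp only [modR]; ring
    r := _
    r_wellFounded := (measure (Int.natAbs ∘ Zsqrtd.norm)).wf
    remainder_lt := fun a b hb => natAbs_norm_modR_lt a hb
    mul_left_not_lt := fun a b hb0 => not_lt_of_ge (natAbs_norm_le_mul_left a hb0) }


theorem unit_eq (u : R) (hu : IsUnit u) : u = 1 ∨ u = -1 := by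
  have h1 : u.norm = 1 := (Zsqrtd.norm_eq_one_iff' (by norm_num) u).2 hu
  rw [Zsqrtd.norm_def] at h1
  have him : u.im = 0 := by nlinarith [sq_nonneg u.re, sq_nonneg u.im]
  have hre : u.re = 1 ∨ u.re = -1 := mul_self_eq_one_iff.1 (by nlinarith)
  rcases hre with h | h
  · left; ext <;> simp [h, him]
  · right; ext <;> simp [h, him]

theorem prime_pi {r : R} (hr : r = ⟨3, 2⟩ ∨ r = ⟨3, -2⟩) : Prime r := by
  have hnorm : r.norm = 17 := by rcases hr with rfl | rfl <;> simp [Zsqrtd.norm_def] <;> norm_num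
  rw [← irreducible_iff_prime]
  constructor
  · intro hu
    have := (Zsqrtd.norm_eq_one_iff' (by norm_num) r).2 hu
    omega
  · intro a b hab
    have hn : a.norm * b.norm = 17 := by rw [← Zsqrtd.norm_mul, ← hab, hnorm]
    have ha' := Zsqrtd.norm_nonneg (show (-2:ℤ) ≤ 0 by norm_num) a
    have hb' := Zsqrtd.norm_nonneg (show (-2:ℤ) ≤ 0 by norm_num) b
    have hmn : a.norm.natAbs * b.norm.natAbs = 17 := by
      rw [← Int.natAbs_mul, hn]; rfl
    have h17 : Nat.Prime 17 := by norm_num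
    rcases h17.eq_one_or_self_of_dvd _ ⟨b.norm.natAbs, hmn.symm⟩ with h | h
    · left; exact Zsqrtd.norm_eq_one_iff.1 h
    · right; rw [h] at hmn; refine Zsqrtd.norm_eq_one_iff.1 ?_; omega



theorem pow4_comp (a b : ℤ) :
    ((⟨a, b⟩ : R))^4 = ⟨(a^2 - 2*b^2)^2 - 8*a^2*b^2, 4*(a*b*(a^2 - 2*b^2))⟩ := by
  ext <;> simp [pow_succ, Zsqrtd.re_mul, Zsqrtd.im_mul] <;> ring

theorem no_rep (x w : ℤ) (hx : Odd x) (rho u beta : R)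
    (hrho : rho = ⟨3, 2⟩ ∨ rho = ⟨3, -2⟩) (hu : u = 1 ∨ u = -1)
    (hA : (⟨x^2, 4*w⟩ : R) = rho * (u * beta^4)) : False := by
  obtain ⟨a, b⟩ := beta
  rw [pow4_comp] at hA
  have hodd : x^2 % 2 = 1 := Int.odd_iff.1 (hx.pow)
  set P := (a^2 - 2*b^2)^2 - 8*a^2*b^2 with hP
  set q := a*b*(a^2 - 2*b^2) with hq
  clear_value P q
  set X := x^2 with hX
  clear_value X
  rw [Zsqrtd.ext_iff] at hA
  rcases hrho with rfl | rfl <;> rcases hu with rfl | rfl <;>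
    simp only [Zsqrtd.re_mul, Zsqrtd.im_mul, Zsqrtd.re_one, Zsqrtd.im_one, one_mul, neg_mul,
      Zsqrtd.re_neg, Zsqrtd.im_neg, neg_neg, mul_neg] at hA <;>
  · obtain ⟨h1, h2⟩ := hA
    omega

theorem no_primitive (x y z' : ℤ) (hx : Odd x) (hxy : IsCoprime x y) (hxz : IsCoprime x z')
    (h : x^4 + 32*z'^2 = 17*y^4) : False := by
  have hAA : ((⟨x^2, 4*z'⟩ : R)) * star ⟨x^2, 4*z'⟩ = 17 * ((y : ℤ) : R)^4 := by
    have h1 : ((⟨x^2, 4*z'⟩ : R)) * star ⟨x^2, 4*z'⟩ = ((x^4 + 32*z'^2 : ℤ) : R) := by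
      ext <;> simp only [Zsqrtd.re_mul, Zsqrtd.im_mul, Zsqrtd.re_add, Zsqrtd.im_add, Zsqrtd.re_star, Zsqrtd.im_star, Zsqrtd.re_intCast, Zsqrtd.im_intCast] <;> ring
    rw [h1, h]; push_cast; ring
  -- coprimality of the two factors
  have h2d : ¬ (2:ℤ) ∣ x := by have := Int.odd_iff.1 hx; omega
  have h2c : IsCoprime x 2 := (Int.prime_two.coprime_iff_not_dvd.2 h2d).symm
  have hx8z : IsCoprime (x^2) (8*z') := by
    have h1 : IsCoprime x (8*z') := by
      have h3 : IsCoprime x (2^3 * z') := (h2c.pow_right).mul_right hxz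
      convert h3 using 2 <;> norm_num
    exact h1.pow_left
  obtain ⟨s, t, hst⟩ := hx8z
  obtain ⟨a', b', hab⟩ := (h2c.symm.pow_right : IsCoprime (2:ℤ) (x^4))
  have hcop : IsCoprime ((⟨x^2, 4*z'⟩ : R)) (star ⟨x^2, 4*z'⟩) := by
    refine ⟨((a' - 16*b'*z'^2 : ℤ) : R) * ⟨s, -t⟩,
      ((a' - 16*b'*z'^2 : ℤ) : R) * ⟨s, t⟩ + ((b' : ℤ) : R) * ⟨x^2, 4*z'⟩, ?_⟩
    ext
    · simp only [Zsqrtd.re_mul, Zsqrtd.im_mul, Zsqrtd.re_add, Zsqrtd.im_add, Zsqrtd.re_star, Zsqrtd.im_star, Zsqrtd.re_intCast, Zsqrtd.im_intCast, Zsqrtd.re_one, Zsqrtd.im_one]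
      push_cast
      linear_combination (2*(a' - 16*b'*z'^2))*hst + hab
    · simp only [Zsqrtd.re_mul, Zsqrtd.im_mul, Zsqrtd.re_add, Zsqrtd.im_add, Zsqrtd.re_star, Zsqrtd.im_star, Zsqrtd.re_intCast, Zsqrtd.im_intCast, Zsqrtd.re_one, Zsqrtd.im_one]
      push_cast
      ring
  -- the prime above 17
  have hpi : Prime ((⟨3, 2⟩ : R)) := prime_pi (Or.inl rfl)
  have hdvd : (⟨3, 2⟩ : R) ∣ (⟨x^2, 4*z'⟩ : R) * star ⟨x^2, 4*z'⟩ := by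
    rw [hAA]
    refine Dvd.dvd.mul_right ⟨(⟨3, -2⟩ : R), ?_⟩ _
    ext <;> simp [Zsqrtd.re_mul, Zsqrtd.im_mul] <;> norm_num
  obtain ⟨rho, B, hrho, hAB⟩ : ∃ rho B, (rho = (⟨3,2⟩:R) ∨ rho = ⟨3,-2⟩) ∧
      (⟨x^2, 4*z'⟩ : R) = rho * B := by
    rcases hpi.2.2 _ _ hdvd with ⟨B, hB⟩ | ⟨C, hC⟩
    · exact ⟨_, B, Or.inl rfl, hB⟩
    · refine ⟨_, star C, Or.inr rfl, ?_⟩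
      have h2 := congrArg star hC
      rw [star_star, star_mul] at h2
      have h3 : star ((⟨3, 2⟩ : R)) = ((⟨3, -2⟩ : R)) := by
        ext <;> simp [Zsqrtd.re_star, Zsqrtd.im_star]
      rw [h2, h3, mul_comm]
  have hsA : star (⟨x^2, 4*z'⟩ : R) = star rho * star B := by rw [hAB, star_mul, mul_comm]
  have hrr : rho * star rho = 17 := by
    rcases hrho with rfl | rfl <;> ext <;>
      simp [Zsqrtd.re_mul, Zsqrtd.im_mul] <;> norm_num
  have h17ne : (17 : R) ≠ 0 := by
    intro hh
    rw [Zsqrtd.ext_iff] at hh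
    simp at hh
  have hBB : B * star B = ((y : ℤ) : R)^4 := by
    apply mul_left_cancel₀ h17ne
    rw [← hrr]
    calc rho * star rho * (B * star B) = (rho * B) * (star rho * star B) := by ring
    _ = 17 * ((y : ℤ) : R)^4 := by rw [← hAB, ← hsA, hAA]
    _ = rho * star rho * ((y : ℤ) : R)^4 := by rw [hrr]
  have hBcop : IsCoprime B (star B) := by
    apply IsCoprime.of_isCoprime_of_dvd_left (IsCoprime.of_isCoprime_of_dvd_right hcop _)
    · exact ⟨rho, by rw [hAB, mul_comm]⟩
    · exact ⟨star rho, by rw [hsA, mul_comm]⟩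
  obtain ⟨beta, u, hu⟩ := exists_associated_pow_of_mul_eq_pow' hBcop hBB
  exact no_rep x z' hx rho (↑u) beta hrho (unit_eq _ u.isUnit)
    (by rw [hAB, ← hu]; ring)

theorem pow4_even {k : ℤ} (hk : Even k) : ∃ e, k^4 = 16*e := by
  obtain ⟨m, rfl⟩ := hk
  exact ⟨m^4, by ring⟩

theorem pow4_odd {k : ℤ} (hk : Odd k) : ∃ e, k^4 = 16*e + 1 := by
  obtain ⟨m, rfl⟩ := hk
  rcases Int.even_or_odd m with ⟨c, rfl⟩ | ⟨c, rfl⟩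
  · exact ⟨16*c^4 + 16*c^3 + 6*c^2 + c, by ring⟩
  · exact ⟨16*c^4 + 48*c^3 + 54*c^2 + 27*c + 5, by ring⟩

theorem four_dvd_of_eight_dvd_sq {z : ℤ} (h : (8:ℤ) ∣ z^2) : (4:ℤ) ∣ z := by
  have h2 : (2:ℤ) ∣ z := by
    refine Int.prime_two.dvd_of_dvd_pow (n := 2) (dvd_trans ⟨4, by norm_num⟩ h)
  obtain ⟨m, rfl⟩ := h2
  have h2m : (2:ℤ) ∣ m := by
    refine Int.prime_two.dvd_of_dvd_pow (n := 2) ?_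
    obtain ⟨k, hk⟩ := h
    exact ⟨k, by linarith [hk]⟩
  obtain ⟨n, rfl⟩ := h2m
  exact ⟨n, by ring⟩

theorem not_unit_int_prime {p : ℕ} (hp : p.Prime) : ¬ IsUnit (p : ℤ) := by
  intro hu
  have h2 := hp.two_le
  rcases Int.isUnit_iff.1 hu with h | h <;> omega

theorem no_coprime (x y z : ℤ) (hxy : IsCoprime x y) (h : x^4 - 17*y^4 = -2*z^2) : False := by
  obtain ⟨Z, hZ⟩ : ∃ Z, z^2 = Z := ⟨_, rfl⟩
  rcases Int.even_or_odd x with hex | hox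
  · rcases Int.even_or_odd y with hey | hoy
    · -- both even: contradicts coprimality
      exact not_unit_int_prime Nat.prime_two
        (hxy.isUnit_of_dvd' hex.two_dvd hey.two_dvd)
    · obtain ⟨e1, he1⟩ := pow4_even hex
      obtain ⟨e2, he2⟩ := pow4_odd hoy
      rw [he1, he2, hZ] at h
      omega
  · rcases Int.even_or_odd y with hey | hoy
    · obtain ⟨e1, he1⟩ := pow4_odd hox
      obtain ⟨e2, he2⟩ := pow4_even hey
      rw [he1, he2, hZ] at h
      omega
    · -- both odd
      obtain ⟨e1, he1⟩ := pow4_odd hox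
      obtain ⟨e2, he2⟩ := pow4_odd hoy
      have h16 : (8:ℤ) ∣ z^2 := by
        rw [hZ]
        have h' := h
        rw [he1, he2, hZ] at h'
        omega
      obtain ⟨z', rfl⟩ := four_dvd_of_eight_dvd_sq h16
      have heq : x^4 + 32*z'^2 = 17*y^4 := by linear_combination h
      -- coprimality of x and z'
      have hxz : IsCoprime x z' := by
        rw [Int.isCoprime_iff_gcd_eq_one]
        by_contra hg
        have hgne : Int.gcd x z' ≠ 0 := by
          intro h0
          rw [Int.gcd_eq_zero_iff] at h0
          exact (by simp [h0.1] : ¬ Odd (0:ℤ)) (h0.1 ▸ hox)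
        obtain ⟨p, hp, hpd⟩ := Nat.exists_prime_and_dvd hg
        have hpx : (p:ℤ) ∣ x := dvd_trans (Int.natCast_dvd_natCast.2 hpd) (Int.gcd_dvd_left _ _)
        have hpz : (p:ℤ) ∣ z' := dvd_trans (Int.natCast_dvd_natCast.2 hpd) (Int.gcd_dvd_right _ _)
        have hp' : Prime (p:ℤ) := Nat.prime_iff_prime_int.mp hp
        have hpy17 : (p:ℤ) ∣ 17*y^4 := by
          rw [← heq]
          exact dvd_add (dvd_pow hpx (by norm_num)) (Dvd.dvd.mul_left (dvd_pow hpz two_ne_zero) 32)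
        rcases hp'.2.2 _ _ hpy17 with hp17 | hpy
        · -- p = 17
          have hp17' : p = 17 := by
            have hd : p ∣ 17 := Int.natCast_dvd_natCast.1 (by exact_mod_cast hp17)
            exact (Nat.prime_dvd_prime_iff_eq hp (by norm_num)).1 hd
          subst hp17'
          have hpx' : (17:ℤ) ∣ x := by exact_mod_cast hpx
          have hpz' : (17:ℤ) ∣ z' := by exact_mod_cast hpz
          obtain ⟨k, hk⟩ := hpx'
          obtain ⟨m, hm⟩ := hpz'
          have hdvd2 : (17*17 : ℤ) ∣ 17*y^4 := by
            rw [← heq, hk, hm]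
            exact ⟨289*k^4 + 32*m^2, by ring⟩
          have h17y : (17:ℤ) ∣ y^4 :=
            (mul_dvd_mul_iff_left (by norm_num : (17:ℤ) ≠ 0)).1 hdvd2
          have hp17Z : Prime (17:ℤ) := by norm_num
          have h17y' : (17:ℤ) ∣ y := hp17Z.dvd_of_dvd_pow h17y
          exact not_unit_int_prime hp (hxy.isUnit_of_dvd' hpx (by exact_mod_cast h17y'))
        · exact not_unit_int_prime hp
            (hxy.isUnit_of_dvd' hpx (hp'.dvd_of_dvd_pow hpy))
      exact no_primitive x y z' hox hxy hxz heq

end LR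

/-- The Lind–Reichardt curve: `x⁴ − 17·y⁴ = −2·z²` has no nontrivial integral
solutions. -/
theorem lind_reichardt :
    ¬ ∃ x y z : ℤ, (x, y, z) ≠ (0, 0, 0) ∧
      x ^ 4 - 17 * y ^ 4 = -2 * z ^ 2 := by
  classical
  rintro ⟨x, y, z, hne, heq⟩
  have hxy0 : ¬ (x = 0 ∧ y = 0) := by
    rintro ⟨rfl, rfl⟩
    norm_num at heq
    exact hne (by simp [heq])
  have hex : ∃ n : ℕ, ∃ a b c : ℤ, (a ≠ 0 ∨ b ≠ 0) ∧ a.natAbs + b.natAbs = n ∧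
      a^4 - 17*b^4 = -2*c^2 :=
    ⟨x.natAbs + y.natAbs, x, y, z, by tauto, rfl, heq⟩
  obtain ⟨a, b, c, hab0, habn, habc⟩ := Nat.find_spec hex
  have hcop : IsCoprime a b := by
    rw [Int.isCoprime_iff_gcd_eq_one]
    by_contra hg
    have hgne : Int.gcd a b ≠ 0 := by
      intro h0
      rw [Int.gcd_eq_zero_iff] at h0
      exact hab0.elim (fun h => h h0.1) (fun h => h h0.2)
    obtain ⟨p, hp, hpd⟩ := Nat.exists_prime_and_dvd hg
    have hpa : (p:ℤ) ∣ a := dvd_trans (Int.natCast_dvd_natCast.2 hpd) (Int.gcd_dvd_left _ _)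
    have hpb : (p:ℤ) ∣ b := dvd_trans (Int.natCast_dvd_natCast.2 hpd) (Int.gcd_dvd_right _ _)
    obtain ⟨a1, rfl⟩ := hpa
    obtain ⟨b1, rfl⟩ := hpb
    have hp4 : ((p:ℤ))^4 ∣ 2*c^2 := ⟨17*b1^4 - a1^4, by linear_combination habc⟩
    have hpc2 : ((p:ℤ))^2 ∣ c := by
      rcases eq_or_ne p 2 with rfl | hp2
      · have h8 : (8:ℤ) ∣ c^2 := by
          obtain ⟨k, hk⟩ := hp4
          exact ⟨k, by push_cast at hk; linarith⟩
        have h4 := LR.four_dvd_of_eight_dvd_sq h8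
        have : ((2:ℤ))^2 ∣ c := by norm_num; exact h4
        exact_mod_cast this
      · have h2p : ¬ (2:ℤ) ∣ (p:ℤ) := by
          intro hd
          exact hp2 ((Nat.prime_dvd_prime_iff_eq Nat.prime_two hp).1
            (Int.natCast_dvd_natCast.1 (by exact_mod_cast hd))).symm
        have hco : IsCoprime ((p:ℤ)^4) 2 :=
          ((Int.prime_two.coprime_iff_not_dvd.2 h2p).symm).pow_left
        have hdc : ((p:ℤ))^4 ∣ c^2 := hco.dvd_of_dvd_mul_left hp4
        have hdc2 : ((p:ℤ)^2)^2 ∣ c^2 := by rw [← pow_mul]; exact hdc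
        exact (Int.pow_dvd_pow_iff two_ne_zero).1 hdc2
    obtain ⟨c1, rfl⟩ := hpc2
    have hpZ : ((p:ℤ)) ≠ 0 := by exact_mod_cast hp.ne_zero
    have hnew : a1^4 - 17*b1^4 = -2*c1^2 := by
      apply mul_left_cancel₀ (pow_ne_zero 4 hpZ)
      linear_combination habc
    have hab1 : a1 ≠ 0 ∨ b1 ≠ 0 := by
      by_contra hc
      push_neg at hc
      exact hab0.elim (fun h => h (by rw [hc.1, mul_zero]))
        (fun h => h (by rw [hc.2, mul_zero]))
    have hpos : 0 < a1.natAbs + b1.natAbs := by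
      rcases hab1 with h | h
      · have := Int.natAbs_ne_zero.2 h; omega
      · have := Int.natAbs_ne_zero.2 h; omega
    have hsmall : a1.natAbs + b1.natAbs < Nat.find hex := by
      calc a1.natAbs + b1.natAbs < 2*(a1.natAbs + b1.natAbs) := by omega
        _ ≤ p*(a1.natAbs + b1.natAbs) := Nat.mul_le_mul_right _ hp.two_le
        _ = ((p:ℤ)*a1).natAbs + ((p:ℤ)*b1).natAbs := by
            rw [Int.natAbs_mul, Int.natAbs_mul, Int.natAbs_natCast]; ring
        _ = Nat.find hex := habn
    exact Nat.find_min hex hsmall ⟨a1, b1, c1, hab1, rfl, hnew⟩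
  exact LR.no_coprime a b c hcop habc
end

section
/- If x and y are rational numbers with y² = x³ + 1, then (x, y) is one of (−1, 0), (0, 1), (0, −1), (2, 3), (2, −3). -/
namespace EulerMordell
open NumberField IsCyclotomicExtension IsCyclotomicExtension.Rat
open IsCyclotomicExtension.Rat.Three

noncomputable section

abbrev K : Type := CyclotomicField 3 ℚ

local instance : IsCyclotomicExtension {3} ℚ K := CyclotomicField.isCyclotomicExtension 3 ℚ

local instance : IsCyclotomicExtension {((3 : ℕ+) : ℕ)} ℚ K :=
  CyclotomicField.isCyclotomicExtension 3 ℚ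

lemma hzeta : IsPrimitiveRoot (zeta 3 ℚ K) ↑(3 : ℕ+) := zeta_spec 3 ℚ K

local notation "η" => hzeta.toInteger

local instance : NumberField K := IsCyclotomicExtension.numberField {3} ℚ K

local instance : IsPrincipalIdealRing (𝓞 K) := three_pid K

lemma eta_rel : η ^ 2 + η + 1 = 0 := by
  have := eta_sq_add_eta_add_one hzeta
  rwa [coe_eta] at this

lemma exists_coords (x : 𝓞 K) : ∃ a b : ℤ, x = a + b * η := by
  have htop : Algebra.adjoin ℤ ({η} : Set (𝓞 K)) = ⊤ := by
    have := hzeta.integralPowerBasis.adjoin_gen_eq_top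
    rwa [hzeta.integralPowerBasis_gen] at this
  have hx : x ∈ Algebra.adjoin ℤ ({η} : Set (𝓞 K)) := htop ▸ Algebra.mem_top
  induction hx using Algebra.adjoin_induction with
  | mem y hy =>
    rcases hy with rfl
    exact ⟨0, 1, by simp⟩
  | algebraMap r => exact ⟨r, 0, by simp [algebraMap_int_eq]⟩
  | add y z _ _ hy hz =>
    obtain ⟨a, b, rfl⟩ := hy; obtain ⟨c, d, rfl⟩ := hz
    exact ⟨a + c, b + d, by push_cast; ring⟩
  | mul y z _ _ hy hz =>
    obtain ⟨a, b, rfl⟩ := hy; obtain ⟨c, d, rfl⟩ := hz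
    refine ⟨a * c - b * d, a * d + b * c - b * d, ?_⟩
    have h := eta_rel
    push_cast
    linear_combination ((b : 𝓞 K) * d) * h

lemma coords_zero {a b : ℤ} (h : (a : 𝓞 K) + b * η = 0) : a = 0 ∧ b = 0 := by
  have key : ((a ^ 2 - a * b + b ^ 2 : ℤ) : 𝓞 K) = 0 := by
    push_cast
    linear_combination ((a : 𝓞 K) - b - b * η) * h + (b : 𝓞 K) ^ 2 * eta_rel
  rw [Int.cast_eq_zero] at key
  have hb : b = 0 := by nlinarith [sq_nonneg (2 * a - b), sq_nonneg b]
  have ha : a = 0 := by nlinarith [sq_nonneg (2 * b - a), sq_nonneg a]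
  exact ⟨ha, hb⟩

lemma coords_unique {a b c d : ℤ} (h : (a : 𝓞 K) + b * η = (c : 𝓞 K) + d * η) :
    a = c ∧ b = d := by
  have h0 : ((a - c : ℤ) : 𝓞 K) + (b - d : ℤ) * η = 0 := by push_cast; linear_combination h
  have := coords_zero h0
  omega


lemma eta_cube : η ^ 3 = 1 := hzeta.toInteger_cube_eq_one

lemma dvd2_iff (a : ℤ) : (2:ℤ) ∣ a ↔ (a : ZMod 2) = 0 := by
  rw [ZMod.intCast_zmod_eq_zero_iff_dvd]; norm_num

/-- mod 2 helper -/
lemma parity_poly {m n : ℤ} (h : (2:ℤ) ∣ m + n) : (2:ℤ) ∣ m ^ 2 + 3 * n ^ 2 := by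
  have h' : ((m + n : ℤ) : ZMod 2) = 0 := (dvd2_iff _).mp h
  rw [dvd2_iff]
  push_cast at h' ⊢
  generalize (m : ZMod 2) = x at *
  generalize (n : ZMod 2) = y at *
  revert h'; revert x y; decide

lemma lemmaL {m n k : ℤ} (hco : IsCoprime m n) (h2 : ¬ (2:ℤ) ∣ k) (h3 : ¬ (3:ℤ) ∣ k)
    (hk : m ^ 2 + 3 * n ^ 2 = k ^ 3) :
    ∃ r s : ℤ, m = r ^ 3 - 9 * r * s ^ 2 ∧ n = 3 * r ^ 2 * s - 3 * s ^ 3 := by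
  classical
  have hrel := eta_rel
  have hcube := eta_cube
  set θ : 𝓞 K := 2 * η + 1 with hθdef
  have hθ : θ ^ 2 = -3 := by rw [hθdef]; linear_combination (4 : 𝓞 K) * hrel
  set α : 𝓞 K := (m : 𝓞 K) + n * θ with hα
  set β : 𝓞 K := (m : 𝓞 K) - n * θ with hβ
  have hkc : ((m : 𝓞 K)) ^ 2 + 3 * (n : 𝓞 K) ^ 2 = (k : 𝓞 K) ^ 3 := by exact_mod_cast hk
  have hmul : α * β = (k : 𝓞 K) ^ 3 := by
    rw [hα, hβ]; linear_combination hkc - (n : 𝓞 K) ^ 2 * hθ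
  have hk0 : k ≠ 0 := fun hk0 => h2 (hk0 ▸ dvd_zero 2)
  -- the crucial odd fact
  have hmn2 : ¬ (2:ℤ) ∣ (m + n) := by
    intro hc
    apply h2
    have : (2:ℤ) ∣ k ^ 3 := hk ▸ parity_poly hc
    have := Int.Prime.dvd_pow' (p := 2) Nat.prime_two (by exact_mod_cast this)
    exact_mod_cast this
  -- coprimality of α and β
  have hcopZ : IsCoprime (12 : ℤ) (k ^ 3) := by
    have c2 : IsCoprime (2:ℤ) k := (Int.prime_two.coprime_iff_not_dvd).mpr h2
    have c3 : IsCoprime (3:ℤ) k := (Int.prime_three.coprime_iff_not_dvd).mpr h3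
    have : IsCoprime (2 * (2 * 3) : ℤ) k := c2.mul_left (c2.mul_left c3)
    norm_num at this
    exact this.pow_right
  have hcop : IsCoprime α β := by
    refine isCoprime_of_prime_dvd ?_ ?_
    · rintro ⟨h1, -⟩
      rw [h1, zero_mul] at hmul
      exact hk0 (by exact_mod_cast pow_eq_zero_iff (n := 3) (by norm_num) |>.mp hmul.symm)
    · intro z hz hzα hzβ
      obtain ⟨u, v, huv⟩ := hco
      have huv' : (u : 𝓞 K) * m + (v : 𝓞 K) * n = 1 := by exact_mod_cast huv
      have d1 : z ∣ (2 * (m : 𝓞 K)) := by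
        have := dvd_add hzα hzβ
        rwa [hα, hβ, show ((m : 𝓞 K) + n * θ) + ((m : 𝓞 K) - n * θ) = 2 * m by ring] at this
      have d2 : z ∣ (2 * (n : 𝓞 K)) * θ := by
        have := dvd_sub hzα hzβ
        rwa [hα, hβ, show ((m : 𝓞 K) + n * θ) - ((m : 𝓞 K) - n * θ) = (2 * n) * θ by ring] at this
      have hz2θ : z ∣ 2 * θ := by
        have key : 2 * θ = ((u : 𝓞 K) * θ) * (2 * m) + (v : 𝓞 K) * ((2 * n) * θ) := by
          linear_combination (-2) * θ * huv'
        rw [key]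
        exact dvd_add (Dvd.dvd.mul_left d1 _) (Dvd.dvd.mul_left d2 _)
      have hz12 : z ∣ (12 : 𝓞 K) := by
        have h1 : z ∣ (2 * θ) * (2 * θ) := Dvd.dvd.mul_right hz2θ _
        have h2' : (2 * θ) * (2 * θ) = -12 := by linear_combination 4 * hθ
        rw [h2'] at h1
        exact (dvd_neg).mp h1
      have hzk : z ∣ (k : 𝓞 K) ^ 3 := hmul ▸ Dvd.dvd.mul_right hzα β
      have hcopO : IsCoprime (12 : 𝓞 K) ((k : 𝓞 K) ^ 3) := by
        have h' := hcopZ.map (algebraMap ℤ (𝓞 K))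
        rw [algebraMap_int_eq] at h'
        simp only [Int.coe_castRingHom] at h'
        push_cast at h'
        exact h'
      exact hz.not_unit (hcopO.isUnit_of_dvd' hz12 hzk)
  obtain ⟨d, u, hdu⟩ := exists_associated_pow_of_mul_eq_pow' hcop hmul
  obtain ⟨e, f, hd⟩ := exists_coords d
  have hd3 : d ^ 3 = ((e^3 + f^3 - 3*e*f^2 : ℤ) : 𝓞 K) + ((3*e^2*f - 3*e*f^2 : ℤ)) * η := by
    rw [hd]; push_cast
    linear_combination ((f:𝓞 K)^3 * η + 3*(e:𝓞 K)*(f:𝓞 K)^2 - (f:𝓞 K)^3) * hrel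
  have hαc : α = ((m + n : ℤ) : 𝓞 K) + ((2*n : ℤ)) * η := by
    rw [hα, hθdef]; push_cast; ring
  have hB : (2:ℤ) ∣ (3*e^2*f - 3*e*f^2) := by
    rw [dvd2_iff]
    push_cast
    generalize (e : ZMod 2) = x
    generalize (f : ZMod 2) = y
    revert x y; decide
  -- eliminate bad units
  have hu := Three.Units.mem hzeta u
  have hgamma : ∃ (γ : 𝓞 K) (g h : ℤ), γ ^ 3 = α ∧ γ = (g : 𝓞 K) + h * η := by
    fin_cases hu
    · exact ⟨d, e, f, by simpa using hdu, hd⟩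
    · refine ⟨-d, -e, -f, ?_, by rw [hd]; push_cast; ring⟩
      have : d ^ 3 * (-1) = α := by simpa using hdu
      linear_combination this
    · exfalso
      have heq : ((-(3*e^2*f - 3*e*f^2) : ℤ) : 𝓞 K) + (((e^3+f^3-3*e*f^2) - (3*e^2*f-3*e*f^2) : ℤ)) * η
          = ((m + n : ℤ) : 𝓞 K) + ((2*n : ℤ)) * η := by
        rw [← hαc, ← show d ^ 3 * η = α by simpa [coe_eta] using hdu, hd3]
        push_cast
        linear_combination (-(3*(e:𝓞 K)^2*f - 3*e*(f:𝓞 K)^2)) * hrel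
      obtain ⟨h1, -⟩ := coords_unique heq
      omega
    · exfalso
      have heq : (((3*e^2*f - 3*e*f^2) : ℤ) : 𝓞 K) + (((3*e^2*f-3*e*f^2) - (e^3+f^3-3*e*f^2) : ℤ)) * η
          = ((m + n : ℤ) : 𝓞 K) + ((2*n : ℤ)) * η := by
        rw [← hαc, ← show d ^ 3 * (-η) = α by simpa [coe_eta] using hdu, hd3]
        push_cast
        linear_combination ((3*(e:𝓞 K)^2*f - 3*e*(f:𝓞 K)^2)) * hrel
      obtain ⟨h1, -⟩ := coords_unique heq
      omega
    · exfalso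
      have heq : (((3*e^2*f-3*e*f^2) - (e^3+f^3-3*e*f^2) : ℤ) : 𝓞 K) + ((-(e^3+f^3-3*e*f^2) : ℤ)) * η
          = ((m + n : ℤ) : 𝓞 K) + ((2*n : ℤ)) * η := by
        rw [← hαc, ← show d ^ 3 * (η^2) = α by simpa [coe_eta] using hdu, hd3]
        push_cast
        linear_combination (-((e:𝓞 K)^3+(f:𝓞 K)^3-3*e*(f:𝓞 K)^2)) * hrel
          + (-(3*(e:𝓞 K)^2*f - 3*e*(f:𝓞 K)^2)) * hcube
      obtain ⟨h1, h2'⟩ := coords_unique heq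
      omega
    · exfalso
      have heq : (((e^3+f^3-3*e*f^2) - (3*e^2*f-3*e*f^2) : ℤ) : 𝓞 K) + (((e^3+f^3-3*e*f^2) : ℤ)) * η
          = ((m + n : ℤ) : 𝓞 K) + ((2*n : ℤ)) * η := by
        rw [← hαc, ← show d ^ 3 * (-η^2) = α by simpa [coe_eta] using hdu, hd3]
        push_cast
        linear_combination ((e:𝓞 K)^3+(f:𝓞 K)^3-3*e*(f:𝓞 K)^2) * hrel
          + ((3*(e:𝓞 K)^2*f - 3*e*(f:𝓞 K)^2)) * hcube
      obtain ⟨h1, h2'⟩ := coords_unique heq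
      omega
  obtain ⟨γ, g, h, hγ3, hγc⟩ := hgamma
  -- normalize to even η-coordinate
  have hgamma2 : ∃ (γ₂ : 𝓞 K) (g₂ h₂ : ℤ), γ₂ ^ 3 = α ∧ γ₂ = (g₂ : 𝓞 K) + (h₂ : ℤ) * η ∧
      (2:ℤ) ∣ h₂ := by
    rcases Int.even_or_odd h with ⟨s, hs⟩ | ⟨s, hs⟩
    · exact ⟨γ, g, h, hγ3, hγc, ⟨s, by omega⟩⟩
    · rcases Int.even_or_odd g with ⟨t, ht⟩ | ⟨t, ht⟩
      · refine ⟨γ * η ^ 2, h - g, -g, ?_, ?_, ⟨-t, by omega⟩⟩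
        · rw [mul_pow, show ((η : 𝓞 K) ^ 2) ^ 3 = ((η : 𝓞 K) ^3)^2 by ring, hcube, one_pow,
            mul_one, hγ3]
        · rw [hγc]
          push_cast
          linear_combination ((g : 𝓞 K)) * hrel + (h : 𝓞 K) * hcube
      · refine ⟨γ * η, -h, g - h, ?_, ?_, ⟨t - s, by omega⟩⟩
        · rw [mul_pow, hcube, mul_one, hγ3]
        · rw [hγc]
          push_cast
          linear_combination ((h : 𝓞 K)) * hrel
  clear hγc hγ3
  obtain ⟨γ₂, g₂, h₂, hγ₂3, hγ₂c, s, hs2⟩ := hgamma2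
  have hγ₂c' : γ₂ = (g₂ : 𝓞 K) + ((2 * s : ℤ) : 𝓞 K) * η := by rw [hγ₂c, hs2]
  set r : ℤ := g₂ - s with hrdef
  have hγθ : γ₂ = ((r : 𝓞 K)) + (s : 𝓞 K) * θ := by
    rw [hγ₂c', hrdef, hθdef]; push_cast; ring
  have hstep : γ₂ ^ 3 = ((r^3 - 9*r*s^2 : ℤ) : 𝓞 K) + ((3*r^2*s - 3*s^3 : ℤ) : 𝓞 K) * θ := by
    rw [hγθ]
    push_cast
    linear_combination (3*(r:𝓞 K)*(s:𝓞 K)^2 + (s:𝓞 K)^3*θ) * hθ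
  have hXY : ((m + n : ℤ) : 𝓞 K) + ((2*n : ℤ)) * η
      = (((r^3 - 9*r*s^2) + (3*r^2*s - 3*s^3) : ℤ) : 𝓞 K) + ((2*(3*r^2*s - 3*s^3) : ℤ)) * η := by
    rw [← hαc, ← hγ₂3, hstep, hθdef]
    push_cast
    ring
  obtain ⟨h1, h2'⟩ := coords_unique hXY
  refine ⟨r, s, by linarith, by linarith⟩


lemma parity_poly2 {m n : ℤ} (h : (2:ℤ) ∣ m ^ 2 + 3 * n ^ 2) : (2:ℤ) ∣ m + n := by
  have h' : ((m ^ 2 + 3 * n ^ 2 : ℤ) : ZMod 2) = 0 := (dvd2_iff _).mp h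
  rw [dvd2_iff]
  push_cast at h' ⊢
  generalize (m : ZMod 2) = x at *
  generalize (n : ZMod 2) = y at *
  revert h'; revert x y; decide

lemma cube_inj {a b : ℤ} (h : a ^ 3 = b ^ 3) : a = b := by
  by_contra hne
  rcases lt_or_gt_of_ne hne with hlt | hlt
  · nlinarith [sq_nonneg a, sq_nonneg b, sq_nonneg (a + b), sq_nonneg (a - b)]
  · nlinarith [sq_nonneg a, sq_nonneg b, sq_nonneg (a + b), sq_nonneg (a - b)]

lemma unit_int {z : ℤ} (h : IsUnit z) : z = 1 ∨ z = -1 := Int.isUnit_iff.mp h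

lemma prime_abs_two {z : ℤ} (hz : Prime z) (h : z ∣ 2) : (2:ℤ) ∣ z := by
  have h1 : z.natAbs ∣ 2 := by
    have := Int.natAbs_dvd_natAbs.mpr h
    simpa using this
  have h2 : z.natAbs = 2 :=
    (Nat.prime_dvd_prime_iff_eq (Int.prime_iff_natAbs_prime.mp hz) Nat.prime_two).mp h1
  have : ((2:ℕ) : ℤ) ∣ z := by rw [← h2]; exact Int.natAbs_dvd.mpr dvd_rfl
  exact_mod_cast this

lemma prime_abs_three {z : ℤ} (hz : Prime z) (h : z ∣ 3) : (3:ℤ) ∣ z := by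
  have h1 : z.natAbs ∣ 3 := by
    have := Int.natAbs_dvd_natAbs.mpr h
    simpa using this
  have h2 : z.natAbs = 3 :=
    (Nat.prime_dvd_prime_iff_eq (Int.prime_iff_natAbs_prime.mp hz) Nat.prime_three).mp h1
  have : ((3:ℕ) : ℤ) ∣ z := by rw [← h2]; exact Int.natAbs_dvd.mpr dvd_rfl
  exact_mod_cast this

lemma parity_rs {m n r s : ℤ} (hm : m = r^3 - 9*r*s^2) (hn : n = 3*r^2*s - 3*s^3)
    (h : ¬ (2:ℤ) ∣ (m + n)) : ¬ (2:ℤ) ∣ (r + s) := by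
  intro ⟨w, hw⟩
  apply h
  refine ⟨w*(r^2+s^2) + (r^2*s - 5*r*s^2 - 2*s^3), ?_⟩
  rw [hm, hn]
  linear_combination (r^2+s^2) * hw

/-- the size comparison: `|C|³ ≤ |m| < |c|³` gives `C.natAbs < c.natAbs`. -/
lemma size_lemma {C m c : ℤ} (h1 : C ^ 3 ∣ m) (hm : m ≠ 0) (h2 : m ^ 2 < c ^ 6) :
    C.natAbs < c.natAbs := by
  have hCm : C.natAbs ^ 3 ≤ m.natAbs := by
    have := Int.natAbs_dvd_natAbs.mpr h1
    rw [Int.natAbs_pow] at this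
    exact Nat.le_of_dvd (by simpa [Int.natAbs_pos] using hm) this
  have hmc : m.natAbs ^ 2 < c.natAbs ^ 6 := by
    have e1 : ((m.natAbs ^ 2 : ℕ) : ℤ) = m ^ 2 := by
      push_cast [← Int.natAbs_pow]
      exact abs_of_nonneg (sq_nonneg m)
    have e2 : ((c.natAbs ^ 6 : ℕ) : ℤ) = c ^ 6 := by
      push_cast [← Int.natAbs_pow]
      exact abs_of_nonneg (by nlinarith [sq_nonneg (c^3)])
    have h2' := h2
    rw [← e1, ← e2] at h2'
    exact_mod_cast h2'
  by_contra hle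
  push_neg at hle
  have : c.natAbs ^ 6 ≤ m.natAbs ^ 2 := by
    calc c.natAbs ^ 6 = (c.natAbs ^ 3) ^ 2 := by ring
    _ ≤ (C.natAbs ^ 3) ^ 2 := Nat.pow_le_pow_left (Nat.pow_le_pow_left hle 3) 2
    _ ≤ m.natAbs ^ 2 := Nat.pow_le_pow_left hCm 2
  omega

lemma size_ineq {m c X : ℤ} (hc6 : c^6 = m^2 * X) (hm2 : 1 ≤ m^2) (hX : 2 ≤ X) :
    m^2 < c^6 := by nlinarith [hm2, hX, hc6]

set_option maxHeartbeats 1000000 in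
theorem lemE_aux : ∀ (N : ℕ) (a b c : ℤ), c.natAbs ≤ N → IsCoprime a b →
    a ^ 3 + b ^ 3 = 2 * c ^ 3 → a = b ∨ a = -b := by
  intro N
  induction N with
  | zero =>
    intro a b c hc hco h
    have hc0 : c = 0 := by omega
    right
    have : a ^ 3 = (-b) ^ 3 := by rw [hc0] at h; linear_combination h
    exact cube_inj this
  | succ N ih =>
    intro a b c hc hco h
    by_cases hc0 : c = 0
    · right
      have : a ^ 3 = (-b) ^ 3 := by rw [hc0] at h; linear_combination h
      exact cube_inj this
    by_contra hcon
    push_neg at hcon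
    obtain ⟨hab, hab'⟩ := hcon
    -- a + b is even
    have hpar : (2:ℤ) ∣ (a + b) := by
      have h2 : ((a^3 + b^3 : ℤ) : ZMod 2) = 0 := by
        rw [h]; push_cast; ring_nf
        generalize ((c:ZMod 2)) = z
        revert z; decide
      rw [dvd2_iff]
      push_cast at h2 ⊢
      generalize (a : ZMod 2) = x at *
      generalize (b : ZMod 2) = y at *
      revert h2; revert x y; decide
    obtain ⟨m, hm⟩ := hpar
    obtain ⟨n, hn⟩ : ∃ n, a - b = 2 * n := ⟨m - b, by omega⟩
    have ha : a = m + n := by omega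
    have hb : b = m - n := by omega
    have hmn : IsCoprime m n := by
      obtain ⟨u, v, huv⟩ := hco
      rw [ha, hb] at huv
      exact ⟨u + v, u - v, by linear_combination huv⟩
    have heq : m * (m^2 + 3*n^2) = c^3 := by
      have h2 : 2 * (m * (m^2 + 3*n^2)) = 2 * c^3 := by
        rw [← h, ha, hb]; ring
      exact mul_left_cancel₀ two_ne_zero h2
    have hm0 : m ≠ 0 := fun h0 => hab' (by omega)
    have hn0 : n ≠ 0 := fun h0 => hab (by omega)
    have hmna : ¬ (2:ℤ) ∣ (m + n) := by
      intro hd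
      have hda : (2:ℤ) ∣ a := ha ▸ hd
      have hdb : (2:ℤ) ∣ b := by
        obtain ⟨w, hw⟩ := hda
        exact ⟨m - w, by omega⟩
      rcases unit_int (hco.isUnit_of_dvd' hda hdb) with h1 | h1 <;> norm_num at h1
    by_cases h3m : (3:ℤ) ∣ m
    · -- case 3 ∣ m
      obtain ⟨M0, hM0⟩ := h3m
      have h3n : ¬ (3:ℤ) ∣ n := by
        intro hd
        rcases unit_int (hmn.isUnit_of_dvd' ⟨M0, hM0⟩ hd) with h1 | h1 <;> norm_num at h1
      have h3c : (3:ℤ) ∣ c := by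
        refine Int.prime_three.dvd_of_dvd_pow (n := 3) (a := c) ⟨3*M0*(n^2+3*M0^2), ?_⟩
        rw [← heq, hM0]; ring
      obtain ⟨C0, hC0⟩ := h3c
      have heq2 : 3 * C0^3 = M0 * (n^2+3*M0^2) := by
        have h9 : 9 * (3 * C0^3) = 9 * (M0 * (n^2+3*M0^2)) := by
          have h' := heq
          rw [hM0, hC0] at h'
          linear_combination -h'
        linarith
      have h3X : ¬ (3:ℤ) ∣ (n^2+3*M0^2) := by
        intro hd
        apply h3n
        refine Int.prime_three.dvd_of_dvd_pow (n := 2) (a := n) ?_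
        obtain ⟨w, hw⟩ := hd
        exact ⟨w - M0^2, by linarith⟩
      have h3M : (3:ℤ) ∣ M0 := by
        rcases (Int.prime_three.2.2 M0 (n^2+3*M0^2) ⟨C0^3, heq2.symm⟩) with hd | hd
        · exact hd
        · exact absurd hd h3X
      obtain ⟨M1, hM1⟩ := h3M
      have heq3 : M1 * (n^2+3*M0^2) = C0^3 := by
        have h9 : 3 * (M1 * (n^2+3*M0^2)) = 3 * C0^3 := by
          linear_combination (-1 : ℤ) * heq2 - (n^2+3*M0^2) * hM1
        have := mul_left_cancel₀ (show (3:ℤ) ≠ 0 by norm_num) h9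
        linarith [this]
      have hM0n : IsCoprime M0 n := by
        have : IsCoprime n m := hmn.symm
        have h' : IsCoprime n M0 := this.of_isCoprime_of_dvd_right ⟨3, by rw [hM0]; ring⟩
        exact h'.symm
      have hM1n : IsCoprime M1 n := (hM0n.of_isCoprime_of_dvd_left ⟨3, by rw [hM1]; ring⟩)
      have hcopM1 : IsCoprime M1 (n^2+3*M0^2) := by
        have := (hM1n.pow_right (n := 2)).add_mul_left_right (27*M1)
        rwa [show n^2 + M1*(27*M1) = n^2 + 3*M0^2 from by rw [hM1]; ring] at this
      obtain ⟨e, he⟩ := Int.eq_pow_of_mul_eq_pow_odd_left hcopM1 (by decide) heq3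
      obtain ⟨k, hk⟩ := Int.eq_pow_of_mul_eq_pow_odd_right hcopM1 (by decide) heq3
      have hnM0odd : ¬ (2:ℤ) ∣ (n + M0) := by
        intro hd
        apply hmna
        rw [hM0]
        obtain ⟨w, hw⟩ := hd
        exact ⟨w + M0, by omega⟩
      have h2k : ¬ (2:ℤ) ∣ k := by
        intro hd
        exact hnM0odd (parity_poly2 (hk ▸ dvd_pow hd (by norm_num)))
      have h3k : ¬ (3:ℤ) ∣ k := by
        intro hd
        apply h3X
        exact hk ▸ dvd_pow hd (by norm_num)
      obtain ⟨r, s, hrn, hsM⟩ := lemmaL hM0n.symm h2k h3k hk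
      -- n = r³-9rs², M0 = 3r²s-3s³
      have hM1eq : M1 = r^2*s - s^3 := by
        rw [hM1] at hsM; linarith
      have hrs : IsCoprime r s := by
        apply isCoprime_of_prime_dvd
        · rintro ⟨rfl, rfl⟩
          exact hn0 (by rw [hrn]; ring)
        · intro z hz hzr hzs
          have hzn : z ∣ n := by
            rw [hrn]
            exact dvd_sub (dvd_pow hzr (by norm_num)) ((hzr.mul_left 9).mul_right (s^2))
          have hzM : z ∣ M0 := by
            rw [hsM]
            exact dvd_sub (hzs.mul_left (3*r^2)) ((dvd_pow hzs (by norm_num)).mul_left 3)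
          exact hz.not_unit (hM0n.symm.isUnit_of_dvd' hzn hzM)
      have hrsodd : ¬ (2:ℤ) ∣ (r + s) := parity_rs hrn hsM hnM0odd
      have hs0 : s ≠ 0 := fun h0 => hm0 (by rw [hM0, hsM, h0]; ring)
      have hr0 : r ≠ 0 := fun h0 => hn0 (by rw [hrn, h0]; ring)
      have hrps0 : r + s ≠ 0 := fun h0 => hrsodd (h0 ▸ dvd_zero 2)
      have hrms0 : r - s ≠ 0 := fun h0 => hrsodd ⟨r, by omega⟩
      have hfac : s * ((r - s) * (r + s)) = e^3 := by
        rw [← he, hM1eq]; ring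
      have hcops : IsCoprime s ((r-s)*(r+s)) := by
        have d1 : IsCoprime s (r - s) := by
          have := hrs.symm.add_mul_left_right (-1)
          rwa [show r + s*(-1) = r - s from by ring] at this
        have d2 : IsCoprime s (r + s) := by
          have := hrs.symm.add_mul_left_right 1
          rwa [show r + s*1 = r + s from by ring] at this
        exact d1.mul_right d2
      obtain ⟨S, hS⟩ := Int.eq_pow_of_mul_eq_pow_odd_left hcops (by decide) hfac
      obtain ⟨w, hw⟩ := Int.eq_pow_of_mul_eq_pow_odd_right hcops (by decide) hfac
      have hcop2 : IsCoprime (r - s) (r + s) := by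
        apply isCoprime_of_prime_dvd
        · rintro ⟨h1, -⟩
          exact hrms0 h1
        · intro z hz hz1 hz2
          have hz2r : z ∣ 2*r := by
            have := dvd_add hz1 hz2
            rwa [show (r-s)+(r+s) = 2*r from by ring] at this
          have hz2s : z ∣ 2*s := by
            have := dvd_sub hz2 hz1
            rwa [show (r+s)-(r-s) = 2*s from by ring] at this
          have hz2' : ¬ z ∣ 2 := by
            intro hd
            exact hrsodd ((prime_abs_two hz hd).trans hz2)
          rcases hz.2.2 2 r hz2r with hd | hd
          · exact hz2' hd
          rcases hz.2.2 2 s hz2s with hd' | hd'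
          · exact hz2' hd'
          exact hz.not_unit (hrs.isUnit_of_dvd' hd hd')
      obtain ⟨A, hA⟩ := Int.eq_pow_of_mul_eq_pow_odd_left hcop2 (by decide) hw
      obtain ⟨B, hB2⟩ := Int.eq_pow_of_mul_eq_pow_odd_right hcop2 (by decide) hw
      have hnew : B^3 + (-A)^3 = 2 * S^3 := by
        rw [show (-A)^3 = -(A^3) from by ring, ← hA, ← hB2, ← hS]; ring
      have hcopBA : IsCoprime B (-A) := by
        have h1 : IsCoprime (r+s) (r-s) := hcop2.symm
        have h2' : IsCoprime B (r - s) :=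
          h1.of_isCoprime_of_dvd_left (hB2 ▸ dvd_pow_self B (by norm_num))
        exact (h2'.of_isCoprime_of_dvd_right (hA ▸ dvd_pow_self A (by norm_num))).neg_right
      -- size
      have hM10 : M1 ≠ 0 := by
        rw [hM1eq]
        intro hzero
        have : s * ((r-s)*(r+s)) = 0 := by linear_combination hzero
        rcases mul_eq_zero.mp this with h' | h'
        · exact hs0 h'
        · rcases mul_eq_zero.mp h' with h'' | h''
          · exact hrms0 h''
          · exact hrps0 h''
      have hsize : S.natAbs < c.natAbs := by
        apply size_lemma (m := M1)
        · exact ⟨(r-s)*(r+s), by rw [← hS, hM1eq]; ring⟩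
        · exact hM10
        · have hc6 : c^6 = M1^2 * (729 * (k^3)^2) := by
            have h1 : c^3 = 27 * (M1 * k^3) := by
              rw [hC0]
              linear_combination (-27 : ℤ) * heq3 + 27 * M1 * hk
            calc c^6 = (c^3)^2 := by ring
            _ = (27 * (M1 * k^3))^2 := by rw [h1]
            _ = M1^2 * (729 * (k^3)^2) := by ring
          have hk0' : k ≠ 0 := by
            intro h0
            rw [h0] at hk
            simp at hk
            nlinarith [sq_nonneg M0, sq_pos_of_ne_zero hn0]
          have hk2 : 1 ≤ (k^3)^2 := by
            have h' := sq_pos_of_ne_zero (pow_ne_zero 3 hk0')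
            omega
          have hM12 : 1 ≤ M1^2 := by
            have h' := sq_pos_of_ne_zero hM10
            omega
          exact size_ineq hc6 hM12 (by linarith)
      rcases ih B (-A) S (by omega) hcopBA hnew with hB' | hB'
      · -- B = -A : r+s = -(r-s) : r = 0
        apply hr0
        have hthis : B^3 = -(A^3) := by rw [hB']; ring
        rw [← hA, ← hB2] at hthis
        omega
      · -- B = A : s = 0
        apply hs0
        have hthis : B^3 = A^3 := by rw [hB']; ring
        rw [← hA, ← hB2] at hthis
        omega
    · -- case 3 ∤ m
      have hcopm : IsCoprime m (m^2+3*n^2) := by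
        have c3 : IsCoprime m 3 := ((Int.prime_three.coprime_iff_not_dvd).mpr h3m).symm
        have hbase : IsCoprime m (3 * n^2) := c3.mul_right (hmn.pow_right (n := 2))
        have := hbase.add_mul_left_right m
        rwa [show 3*n^2 + m*m = m^2+3*n^2 from by ring] at this
      obtain ⟨e, he⟩ := Int.eq_pow_of_mul_eq_pow_odd_left hcopm (by decide) heq
      obtain ⟨k, hk⟩ := Int.eq_pow_of_mul_eq_pow_odd_right hcopm (by decide) heq
      have h2k : ¬ (2:ℤ) ∣ k := by
        intro hd
        exact hmna (parity_poly2 (hk ▸ dvd_pow hd (by norm_num)))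
      have h3k : ¬ (3:ℤ) ∣ k := by
        intro hd
        apply h3m
        have h9 : (3:ℤ) ∣ m^2 := by
          have h' : (3:ℤ) ∣ m^2+3*n^2 := hk ▸ dvd_pow hd (by norm_num)
          obtain ⟨w, hw⟩ := h'
          exact ⟨w - n^2, by linarith⟩
        exact Int.prime_three.dvd_of_dvd_pow h9
      obtain ⟨r, s, hrm, hsn⟩ := lemmaL hmn h2k h3k hk
      have hs0 : s ≠ 0 := fun h0 => hn0 (by rw [hsn, h0]; ring)
      have h3r : ¬ (3:ℤ) ∣ r := by
        rintro ⟨t, ht⟩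
        exact h3m ⟨9*t^3 - 9*t*s^2, by rw [hrm, ht]; ring⟩
      have hrs : IsCoprime r s := by
        apply isCoprime_of_prime_dvd
        · rintro ⟨rfl, rfl⟩
          exact hm0 (by rw [hrm]; ring)
        · intro z hz hzr hzs
          have hzm : z ∣ m := by
            rw [hrm]
            exact dvd_sub (dvd_pow hzr (by norm_num)) ((hzr.mul_left 9).mul_right (s^2))
          have hzn : z ∣ n := by
            rw [hsn]
            exact dvd_sub (hzs.mul_left (3*r^2)) ((dvd_pow hzs (by norm_num)).mul_left 3)
          exact hz.not_unit (hmn.isUnit_of_dvd' hzm hzn)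
      have hrsodd : ¬ (2:ℤ) ∣ (r + s) := parity_rs hrm hsn hmna
      have hrp3s0 : r + 3*s ≠ 0 := fun h0 => hrsodd ⟨-s, by omega⟩
      have hrm3s0 : r - 3*s ≠ 0 := fun h0 => hrsodd ⟨2*s, by omega⟩
      have hfac : r * ((r - 3*s) * (r + 3*s)) = e^3 := by
        rw [← he, hrm]; ring
      have hcops : IsCoprime r ((r-3*s)*(r+3*s)) := by
        have c3' : IsCoprime r 3 := ((Int.prime_three.coprime_iff_not_dvd).mpr h3r).symm
        have crs3 : IsCoprime r (3*s) := c3'.mul_right hrs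
        have d1 : IsCoprime r (r - 3*s) := by
          have := crs3.neg_right.add_mul_left_right 1
          rwa [show -(3*s) + r*1 = r - 3*s from by ring] at this
        have d2 : IsCoprime r (r + 3*s) := by
          have := crs3.add_mul_left_right 1
          rwa [show 3*s + r*1 = r + 3*s from by ring] at this
        exact d1.mul_right d2
      obtain ⟨C, hC⟩ := Int.eq_pow_of_mul_eq_pow_odd_left hcops (by decide) hfac
      obtain ⟨w, hw⟩ := Int.eq_pow_of_mul_eq_pow_odd_right hcops (by decide) hfac
      have hcop2 : IsCoprime (r - 3*s) (r + 3*s) := by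
        apply isCoprime_of_prime_dvd
        · rintro ⟨h1, -⟩
          exact hrm3s0 h1
        · intro z hz hz1 hz2
          have hz2r : z ∣ 2*r := by
            have := dvd_add hz1 hz2
            rwa [show (r-3*s)+(r+3*s) = 2*r from by ring] at this
          have hz6s : z ∣ 2*(3*s) := by
            have := dvd_sub hz2 hz1
            rwa [show (r+3*s)-(r-3*s) = 2*(3*s) from by ring] at this
          have hz2' : ¬ z ∣ 2 := by
            intro hd
            have h2d : (2:ℤ) ∣ r + 3*s := (prime_abs_two hz hd).trans hz2
            exact hrsodd (by obtain ⟨w', hw'⟩ := h2d; exact ⟨w' - s, by omega⟩)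
          rcases hz.2.2 2 r hz2r with hd | hd
          · exact hz2' hd
          rcases hz.2.2 2 (3*s) hz6s with hd' | hd'
          · exact hz2' hd'
          rcases hz.2.2 3 s hd' with hd'' | hd''
          · exact h3r ((prime_abs_three hz hd'').trans hd)
          exact hz.not_unit (hrs.isUnit_of_dvd' hd hd'')
      obtain ⟨A, hA⟩ := Int.eq_pow_of_mul_eq_pow_odd_left hcop2 (by decide) hw
      obtain ⟨B, hB2⟩ := Int.eq_pow_of_mul_eq_pow_odd_right hcop2 (by decide) hw
      have hnew : A^3 + B^3 = 2 * C^3 := by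
        rw [← hA, ← hB2, ← hC]; ring
      have hcopAB : IsCoprime A B := by
        have h2' : IsCoprime A (r + 3*s) :=
          hcop2.of_isCoprime_of_dvd_left (hA ▸ dvd_pow_self A (by norm_num))
        exact h2'.of_isCoprime_of_dvd_right (hB2 ▸ dvd_pow_self B (by norm_num))
      have hsize : C.natAbs < c.natAbs := by
        apply size_lemma (m := m)
        · exact ⟨(r-3*s)*(r+3*s), by rw [← hC, hrm]; ring⟩
        · exact hm0
        · have hc6 : c^6 = m^2 * (k^3)^2 := by
            have h1 : c^3 = m * k^3 := by rw [← heq, hk]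
            calc c^6 = (c^3)^2 := by ring
            _ = (m * k^3)^2 := by rw [h1]
            _ = m^2 * (k^3)^2 := by ring
          have hm2 : 1 ≤ m^2 := by
            have h' := sq_pos_of_ne_zero hm0
            omega
          have hk4 : 4 ≤ k^3 := by
            have hn2 : 1 ≤ n^2 := by have h' := sq_pos_of_ne_zero hn0; omega
            rw [← hk]
            nlinarith
          exact size_ineq hc6 hm2 (by nlinarith [hk4])
      rcases ih A B C (by omega) hcopAB hnew with hB' | hB'
      · -- A = B : s = 0
        apply hs0
        have hthis : A^3 = B^3 := by rw [hB']
        rw [← hA, ← hB2] at hthis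
        omega
      · -- A = -B : r = 0, contradicting 3 ∤ r
        have hthis : A^3 = -(B^3) := by rw [hB']; ring
        rw [← hA, ← hB2] at hthis
        exact h3r ⟨0, by omega⟩

theorem lemE {a b c : ℤ} (hco : IsCoprime a b) (h : a ^ 3 + b ^ 3 = 2 * c ^ 3) :
    a = b ∨ a = -b :=
  lemE_aux c.natAbs a b c le_rfl hco h


lemma t_one {p t : ℤ} (hco : IsCoprime p t) (ht : 0 < t) (hdvd : t ∣ p) : t = 1 := by
  rcases unit_int (hco.symm.isUnit_of_dvd' dvd_rfl hdvd) with h | h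
  · exact h
  · omega

theorem euler_int (p t nn : ℤ) (ht : 0 < t) (hco : IsCoprime p t)
    (h : nn ^ 2 = p ^ 3 + t ^ 6) :
    (p = -1 ∧ t = 1 ∧ nn = 0) ∨ (p = 0 ∧ t = 1 ∧ (nn = 1 ∨ nn = -1)) ∨
      (p = 2 ∧ t = 1 ∧ (nn = 3 ∨ nn = -3)) := by
  have hfac : (nn - t^3) * (nn + t^3) = p^3 := by linear_combination h
  have hnt : IsCoprime nn t := by
    apply isCoprime_of_prime_dvd
    · rintro ⟨-, rfl⟩; exact lt_irrefl 0 ht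
    · intro z hz hzn hzt
      have hzp : z ∣ p := by
        apply hz.dvd_of_dvd_pow (n := 3)
        have : z ∣ nn^2 - t^6 := dvd_sub (dvd_pow hzn (by norm_num)) (dvd_pow hzt (by norm_num))
        rwa [show nn^2 - t^6 = p^3 from by linear_combination h] at this
      exact hz.not_unit (hco.isUnit_of_dvd' hzp hzt)
  rcases Int.even_or_odd (nn - t^3) with ⟨m', hm'⟩ | ⟨m', hm'⟩
  · -- even case : nn - t³ = 2m'
    have hm'' : nn - t^3 = 2*m' := by omega
    have hk'' : nn + t^3 = 2*(m' + t^3) := by omega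
    set k' : ℤ := m' + t^3 with hk'def
    have hp2 : (2:ℤ) ∣ p := by
      have h2 : (2:ℤ) ∣ p^3 := ⟨2*(m'*k'), by rw [← hfac, hm'', hk'']; ring⟩
      have := Int.Prime.dvd_pow' (p := 2) Nat.prime_two (by exact_mod_cast h2)
      exact_mod_cast this
    obtain ⟨P, hP⟩ := hp2
    have hmk : m' * k' = 2 * P^3 := by
      have h4 : 4 * (m' * k') = 4 * (2 * P^3) := by
        rw [← mul_left_cancel₀ (show (4:ℤ) ≠ 0 by norm_num) (show (4:ℤ) * (m'*k') = 4*(m'*k') from rfl)]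
        have := hfac
        rw [hm'', hk'', hP] at this
        linear_combination this
      linarith
    have hcopmk : IsCoprime m' k' := by
      apply isCoprime_of_prime_dvd
      · rintro ⟨h1, h2⟩
        have ht3 : t^3 = 0 := by omega
        have : t = 0 := by exact pow_eq_zero_iff (by norm_num) |>.mp ht3
        omega
      · intro z hz hz1 hz2
        have hzn : z ∣ nn := by
          have : z ∣ m' + k' := dvd_add hz1 hz2
          rwa [show m' + k' = nn from by omega] at this
        have hzt : z ∣ t := by
          apply hz.dvd_of_dvd_pow (n := 3)
          have : z ∣ k' - m' := dvd_sub hz2 hz1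
          rwa [show k' - m' = t^3 from by omega] at this
        exact hz.not_unit (hnt.isUnit_of_dvd' hzn hzt)
    have htne : t ≠ 0 := by omega
    rcases Int.even_or_odd m' with ⟨m'', hmye⟩ | hmodd
    · -- m' even : m' = 2m''
      have hm2 : m' = 2*m'' := by omega
      have hmk2 : m'' * k' = P^3 := by
        have : 2*(m'' * k') = 2*(P^3) := by rw [← hmk, hm2]; ring
        exact mul_left_cancel₀ two_ne_zero this
      have hcop2 : IsCoprime m'' k' := hcopmk.of_isCoprime_of_dvd_left ⟨2, by omega⟩
      obtain ⟨u, hu⟩ := Int.eq_pow_of_mul_eq_pow_odd_left hcop2 (by decide) hmk2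
      obtain ⟨v, hv⟩ := Int.eq_pow_of_mul_eq_pow_odd_right hcop2 (by decide) hmk2
      have hnew : v^3 + (-t)^3 = 2*u^3 := by
        rw [show (-t)^3 = -(t^3) from by ring, ← hv, ← hu]
        omega
      have hcopvt : IsCoprime v (-t) := by
        refine IsCoprime.neg_right ?_
        apply isCoprime_of_prime_dvd
        · rintro ⟨-, rfl⟩; exact htne rfl
        · intro z hz hzv hzt
          have hzk : z ∣ k' := hv ▸ dvd_pow hzv (by norm_num)
          have hzm : z ∣ m' := by
            have : z ∣ k' - t^3 := dvd_sub hzk (dvd_pow hzt (by norm_num))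
            rwa [show k' - t^3 = m' from by omega] at this
          exact hz.not_unit (hcopmk.isUnit_of_dvd' hzm hzk)
      rcases lemE hcopvt hnew with hvt | hvt
      · -- v = -t : k' = -t³, nn = -3t³, p = 2t²
        right; right
        have hk3 : k' = -t^3 := by rw [hv, hvt]; ring
        have hP3 : P^3 = (t^2)^3 := by
          rw [← hmk2, show m'' = -t^3 from by omega, hk3]; ring
        have hPt : P = t^2 := cube_inj hP3
        have hpt : p = 2*t^2 := by rw [hP, hPt]
        have ht1 : t = 1 := t_one hco ht ⟨2*t, by rw [hpt]; ring⟩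
        refine ⟨by rw [hpt, ht1]; ring, ht1, Or.inr ?_⟩
        have : nn = -3*t^3 := by omega
        rw [this, ht1]; ring
      · -- v = t : m' = 0, nn = t³, p = 0
        right; left
        have hvt' : v = t := by omega
        have hk3 : k' = t^3 := by rw [hv, hvt']
        have hm0 : m' = 0 := by omega
        have hnn : nn = t^3 := by omega
        have hp0 : p = 0 := by
          have : p^3 = 0 := by rw [← hfac, show nn - t^3 = 0 from by omega]; ring
          exact pow_eq_zero_iff (by norm_num) |>.mp this
        have ht1 : t = 1 := t_one hco ht (hp0 ▸ dvd_zero t)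
        exact ⟨hp0, ht1, Or.inl (by rw [hnn, ht1]; ring)⟩
    · -- m' odd, so k' even
      have hek : Even (m' * k') := ⟨P^3, by linarith⟩
      rcases Int.even_mul.mp hek with he | he
      · exact absurd he (Int.not_even_iff_odd.mpr hmodd)
      obtain ⟨k'', hk2⟩ := he
      have hk2' : k' = 2*k'' := by omega
      have hmk2 : m' * k'' = P^3 := by
        have : 2*(m' * k'') = 2*(P^3) := by rw [← hmk, hk2']; ring
        exact mul_left_cancel₀ two_ne_zero this
      have hcop2 : IsCoprime m' k'' := hcopmk.of_isCoprime_of_dvd_right ⟨2, by omega⟩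
      obtain ⟨u, hu⟩ := Int.eq_pow_of_mul_eq_pow_odd_left hcop2 (by decide) hmk2
      obtain ⟨v, hv⟩ := Int.eq_pow_of_mul_eq_pow_odd_right hcop2 (by decide) hmk2
      have hnew : u^3 + t^3 = 2*v^3 := by
        rw [← hu, ← hv]
        omega
      have hcoput : IsCoprime u t := by
        apply isCoprime_of_prime_dvd
        · rintro ⟨-, rfl⟩; exact htne rfl
        · intro z hz hzu hzt
          have hzm : z ∣ m' := hu ▸ dvd_pow hzu (by norm_num)
          have hzk : z ∣ k' := by
            have : z ∣ m' + t^3 := dvd_add hzm (dvd_pow hzt (by norm_num))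
            rwa [show m' + t^3 = k' from by omega] at this
          exact hz.not_unit (hcopmk.isUnit_of_dvd' hzm hzk)
      rcases lemE hcoput hnew with hut | hut
      · -- u = t : m' = t³, nn = 3t³, p = 2t²
        right; right
        have hm3 : m' = t^3 := by rw [hu, hut]
        have hP3 : P^3 = (t^2)^3 := by
          rw [← hmk2, hm3, show k'' = t^3 from by omega]; ring
        have hPt : P = t^2 := cube_inj hP3
        have hpt : p = 2*t^2 := by rw [hP, hPt]
        have ht1 : t = 1 := t_one hco ht ⟨2*t, by rw [hpt]; ring⟩
        refine ⟨by rw [hpt, ht1]; ring, ht1, Or.inl ?_⟩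
        have : nn = 3*t^3 := by omega
        rw [this, ht1]; ring
      · -- u = -t : m' = -t³, nn = -t³, p = 0
        right; left
        have hm3 : m' = -t^3 := by rw [hu, hut]; ring
        have hnn : nn = -t^3 := by omega
        have hp0 : p = 0 := by
          have : p^3 = 0 := by rw [← hfac, show nn + t^3 = 0 from by omega]; ring
          exact pow_eq_zero_iff (by norm_num) |>.mp this
        have ht1 : t = 1 := t_one hco ht (hp0 ▸ dvd_zero t)
        exact ⟨hp0, ht1, Or.inr (by rw [hnn, ht1]; ring)⟩
  · -- odd case : nn - t³ odd
    have hoddm : nn - t^3 = 2*m' + 1 := hm'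
    have hcop1 : IsCoprime (nn - t^3) (nn + t^3) := by
      apply isCoprime_of_prime_dvd
      · rintro ⟨h1, -⟩; omega
      · intro z hz hz1 hz2
        have hz2' : ¬ z ∣ 2 := by
          intro hd
          have h2d : (2:ℤ) ∣ nn - t^3 := (prime_abs_two hz hd).trans hz1
          omega
        have hzn : z ∣ 2*nn := by
          have := dvd_add hz1 hz2
          rwa [show (nn - t^3) + (nn + t^3) = 2*nn from by ring] at this
        have hzt : z ∣ 2*t^3 := by
          have := dvd_sub hz2 hz1
          rwa [show (nn + t^3) - (nn - t^3) = 2*t^3 from by ring] at this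
        rcases hz.2.2 2 nn hzn with hd | hd
        · exact hz2' hd
        rcases hz.2.2 2 (t^3) hzt with hd' | hd'
        · exact hz2' hd'
        exact hz.not_unit (hnt.isUnit_of_dvd' hd (hz.dvd_of_dvd_pow hd'))
    obtain ⟨u, hu⟩ := Int.eq_pow_of_mul_eq_pow_odd_left hcop1 (by decide) hfac
    obtain ⟨v, hv⟩ := Int.eq_pow_of_mul_eq_pow_odd_right hcop1 (by decide) hfac
    have hnew : v^3 + (-u)^3 = 2*t^3 := by
      rw [show (-u)^3 = -(u^3) from by ring, ← hu, ← hv]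
      ring
    have hcopvu : IsCoprime v (-u) := by
      refine IsCoprime.neg_right ?_
      have h1 : IsCoprime (nn + t^3) (nn - t^3) := hcop1.symm
      have h2 : IsCoprime v (nn - t^3) :=
        h1.of_isCoprime_of_dvd_left (hv ▸ dvd_pow_self v (by norm_num))
      exact h2.of_isCoprime_of_dvd_right (hu ▸ dvd_pow_self u (by norm_num))
    rcases lemE hcopvu hnew with hvu | hvu
    · -- v = -u : nn = 0, p = -1, t = 1
      left
      have hv3 : v^3 = -(u^3) := by rw [hvu]; ring
      rw [← hu, ← hv] at hv3
      have hnn : nn = 0 := by omega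
      have hp3 : p^3 = (-t^2)^3 := by
        rw [← hfac, hnn]; ring
      have hpt : p = -t^2 := cube_inj hp3
      have ht1 : t = 1 := t_one hco ht ⟨-t, by rw [hpt]; ring⟩
      exact ⟨by rw [hpt, ht1]; ring, ht1, hnn⟩
    · -- v = u : t = 0, contradiction
      exfalso
      have hv3 : v^3 = u^3 := by rw [hvu]; ring
      rw [← hu, ← hv] at hv3
      have : t^3 = 0 := by omega
      have : t = 0 := pow_eq_zero_iff (by norm_num) |>.mp this
      omega


end
end EulerMordell

/-- Euler: the only affine rational points on `y² = x³ + 1` are `(−1, 0)`,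
`(0, ±1)` and `(2, ±3)`. -/
theorem euler_mordell (x y : ℚ) (h : y ^ 2 = x ^ 3 + 1) :
    (x, y) = (-1, 0) ∨ (x, y) = (0, 1) ∨ (x, y) = (0, -1) ∨
      (x, y) = (2, 3) ∨ (x, y) = (2, -3) := by
  open EulerMordell in
  have hq0 : (0:ℤ) < (x.den : ℤ) := by exact_mod_cast x.pos
  have hd0 : (0:ℤ) < (y.den : ℤ) := by exact_mod_cast y.pos
  set p : ℤ := x.num with hpdef
  set q : ℤ := (x.den : ℤ) with hqdef
  set nn : ℤ := y.num with hnndef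
  set d : ℤ := (y.den : ℤ) with hddef
  have hqQ : (q:ℚ) ≠ 0 := by exact_mod_cast hq0.ne'
  have hdQ : (d:ℚ) ≠ 0 := by exact_mod_cast hd0.ne'
  have hx : (x : ℚ) = (p : ℚ) / (q : ℚ) := by rw [hpdef, hqdef]; push_cast; exact (Rat.num_div_den x).symm
  have hy : (y : ℚ) = (nn : ℚ) / (d : ℚ) := by rw [hnndef, hddef]; push_cast; exact (Rat.num_div_den y).symm
  have E0 : nn^2 * q^3 = (p^3 + q^3) * d^2 := by
    have hQ : ((nn^2 * q^3 : ℤ) : ℚ) = (((p^3 + q^3) * d^2 : ℤ) : ℚ) := by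
      push_cast
      have hx' : (p : ℚ) = x * q := by rw [hx]; field_simp
      have hy' : (nn : ℚ) = y * d := by rw [hy]; field_simp
      rw [hx', hy']
      linear_combination (q:ℚ)^3 * (d:ℚ)^2 * h
    exact_mod_cast hQ
  have hxco : IsCoprime p q := by
    rw [Int.isCoprime_iff_gcd_eq_one]
    exact x.reduced
  have hyco : IsCoprime nn d := by
    rw [Int.isCoprime_iff_gcd_eq_one]
    exact y.reduced
  -- q³ = d²
  have h1 : d^2 ∣ q^3 := by
    have hdvd : d^2 ∣ nn^2 * q^3 := ⟨p^3 + q^3, by linarith [E0]⟩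
    exact ((hyco.symm.pow (m := 2) (n := 2)).dvd_of_dvd_mul_left hdvd)
  have h2 : q^3 ∣ d^2 := by
    have hdvd : q^3 ∣ (p^3 + q^3) * d^2 := ⟨nn^2, by linarith [E0]⟩
    have hco3 : IsCoprime (q^3) (p^3 + q^3) := by
      have := ((hxco.symm.pow (m := 3) (n := 3)).add_mul_left_right 1)
      rwa [show p^3 + q^3*1 = p^3 + q^3 from by ring] at this
    exact hco3.dvd_of_dvd_mul_left hdvd
  have hqd : q^3 = d^2 := Int.dvd_antisymm (by positivity) (by positivity) h2 h1
  have hn2 : nn^2 = p^3 + q^3 := by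
    have h5 := E0
    rw [hqd] at h5
    have h6 : nn^2 = p^3 + d^2 := mul_right_cancel₀ (by positivity) h5
    rwa [← hqd] at h6
  -- q is a square
  obtain ⟨t, htd⟩ : q ∣ d := by
    have hq2 : q^2 ∣ d^2 := dvd_trans ⟨q, by ring⟩ h2
    exact (Int.pow_dvd_pow_iff (by norm_num)).mp hq2
  have ht0 : 0 < t := by nlinarith [htd, hq0, hd0]
  have hqt : q = t^2 := by
    have h3 : q^2 * q = q^2 * t^2 := by
      rw [show q^2 * q = q^3 from by ring, hqd, htd]; ring
    exact mul_left_cancel₀ (by positivity) h3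
  have hpt : IsCoprime p t := hxco.of_isCoprime_of_dvd_right ⟨t, by rw [hqt]; ring⟩
  have hdt : d = t^3 := by
    have h4 : q^2 * d = q^2 * t^3 := by
      rw [htd, hqt]; ring
    exact mul_left_cancel₀ (by positivity) h4
  have hint : nn^2 = p^3 + t^6 := by rw [hn2, hqt]; ring
  have := EulerMordell.euler_int p t nn ht0 hpt hint
  -- in all cases t = 1, hence q = 1, d = 1
  have hq1 : t = 1 → q = 1 := fun h1 => by rw [hqt, h1]; ring
  have hd1 : t = 1 → d = 1 := fun h1 => by rw [hdt, h1]; ring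
  have hxval : t = 1 → x = (p : ℚ) := by
    intro h1
    rw [hx, show (q:ℚ) = 1 from by exact_mod_cast hq1 h1, div_one]
  have hyval : t = 1 → y = (nn : ℚ) := by
    intro h1
    rw [hy, show (d:ℚ) = 1 from by exact_mod_cast hd1 h1, div_one]
  rcases this with ⟨hp, ht, hn⟩ | ⟨hp, ht, hn | hn⟩ | ⟨hp, ht, hn | hn⟩
  · left
    rw [hxval ht, hyval ht, hp, hn]; norm_num
  · right; left
    rw [hxval ht, hyval ht, hp, hn]; norm_num
  · right; right; left
    rw [hxval ht, hyval ht, hp, hn]; norm_num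
  · right; right; right; left
    rw [hxval ht, hyval ht, hp, hn]; norm_num
  · right; right; right; right
    rw [hxval ht, hyval ht, hp, hn]; norm_num
end

section
/- If u, s, t are rational numbers satisfying 7·u² = 7·s⁴ + 42·s²·t² − t⁴, then t = 0. -/
set_option maxRecDepth 40000

namespace FLT7Aux

/-! ### Decidable congruence obstructions -/

lemma dec80 : ∀ a b : ZMod 128,
    (2*a+1)^4 + 294*(2*a+1)^2*(2*b+1)^2 - 343*(2*b+1)^4 = 80 := by decide

lemma decsq : ∀ x : ZMod 128, x^2 ≠ 80 := by decide

lemma dec7 : ∀ x y g : ZMod 7, x ≠ 0 → x^2 ≠ 343*g^4 - y^4 + 294*y^2*g^2 := by decide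

lemma dec16 : ∀ z i j : ZMod 16,
    4*z^2 ≠ 343*(2*j+1)^4 + 294*(2*i+1)^2*(2*j+1)^2 - (2*i+1)^4 := by decide

lemma dec8T3 : ∀ f i j : ZMod 8,
    64*f^2 ≠ 343*(2*j+1)^4 + 294*(2*i+1)^2*(2*j+1)^2 - (2*i+1)^4 := by decide

lemma dec8D2 : ∀ i a c : ZMod 8,
    (2*i+1)^2 ≠ 343*(2*a+1)^4 - 147*(2*a+1)^2*(2*c)^2 + 16*(2*c)^4 := by decide

/-! ### Small helpers -/

lemma not_isUnit_int_prime {p : ℕ} (hp : p.Prime) : ¬ IsUnit (p:ℤ) :=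
  (Nat.prime_iff_prime_int.mp hp).not_unit

lemma both_pos {P Q R : ℤ} (h : P * Q = R) (hR : 0 < R) (hsum : 0 ≤ P + Q) :
    0 < P ∧ 0 < Q := by
  rcases lt_trichotomy P 0 with h1|h1|h1
  · exfalso
    rcases lt_trichotomy Q 0 with h2|h2|h2
    · nlinarith
    · nlinarith
    · nlinarith
  · exfalso; nlinarith
  · refine ⟨h1, ?_⟩
    rcases lt_trichotomy Q 0 with h2|h2|h2
    · nlinarith
    · nlinarith
    · exact h2

lemma coprime_of_prime {a b : ℤ} (ha : a ≠ 0)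
    (h : ∀ p : ℕ, p.Prime → (p:ℤ) ∣ a → (p:ℤ) ∣ b → False) : IsCoprime a b := by
  rw [Int.isCoprime_iff_gcd_eq_one]
  by_contra hg
  have h0 : Int.gcd a b ≠ 0 := by
    simp only [Ne, Int.gcd_eq_zero_iff, not_and]
    intro h'; exact absurd h' ha
  exact h _ (Nat.minFac_prime hg)
    ((Int.natCast_dvd_natCast.mpr (Nat.minFac_dvd _)).trans (Int.gcd_dvd_left _ _))
    ((Int.natCast_dvd_natCast.mpr (Nat.minFac_dvd _)).trans (Int.gcd_dvd_right _ _))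

lemma isCoprime_two_odd {a : ℤ} (ha : Odd a) : IsCoprime (2:ℤ) a := by
  rw [Int.isCoprime_iff_gcd_eq_one]
  have : Int.gcd 2 a = Nat.gcd 2 a.natAbs := rfl
  rw [this]
  exact Nat.coprime_two_left.mpr (Int.natAbs_odd.mpr ha)

lemma isCoprime_pow_two_odd {a : ℤ} (j : ℕ) (ha : Odd a) : IsCoprime ((2:ℤ)^j) a :=
  IsCoprime.pow_left (isCoprime_two_odd ha)

lemma odd_of_odd_pow {a : ℤ} {n : ℕ} (hn : n ≠ 0) (h : Odd (a^n)) : Odd a :=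
  (Int.odd_pow' hn).mp h

lemma prime7 : Prime (7:ℤ) := by norm_num

lemma prime_ne_two_of_dvd_odd {p : ℕ} (hp : p.Prime) {a : ℤ} (hodd : Odd a)
    (hdvd : (p:ℤ) ∣ a) : p ≠ 2 := by
  rintro rfl
  obtain ⟨c, rfl⟩ := hdvd
  obtain ⟨j, hj⟩ := hodd
  push_cast at hj
  omega

lemma int_odd_of_prime_ne_two {p : ℕ} (hp : p.Prime) (h2 : p ≠ 2) : Odd (p:ℤ) :=
  (Int.odd_coe_nat p).mpr (hp.odd_of_ne_two h2)

/-! ### Non-divisibility by 7 lemmas -/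

lemma no7s {u s v : ℤ} (hcop : IsCoprime s v)
    (h : u^2 = s^4 + 294*s^2*v^2 - 343*v^4) : ¬ (7:ℤ) ∣ s := by
  intro h7
  obtain ⟨s', rfl⟩ := h7
  have h7u : (7:ℤ) ∣ u := by
    apply prime7.dvd_of_dvd_pow (n := 2)
    exact ⟨343*s'^4 + 2058*s'^2*v^2 - 49*v^4, by linear_combination h⟩
  obtain ⟨u', rfl⟩ := h7u
  have h2 : u'^2 = 49*s'^4 + 294*s'^2*v^2 - 7*v^4 := by
    have h49 : (49:ℤ) * u'^2 = 49 * (49*s'^4 + 294*s'^2*v^2 - 7*v^4) := by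
      linear_combination h
    exact mul_left_cancel₀ (by norm_num) h49
  have h7u' : (7:ℤ) ∣ u' := by
    apply prime7.dvd_of_dvd_pow (n := 2)
    exact ⟨7*s'^4 + 42*s'^2*v^2 - v^4, by linear_combination h2⟩
  obtain ⟨u'', rfl⟩ := h7u'
  have h3 : 7*u''^2 = 7*s'^4 + 42*s'^2*v^2 - v^4 := by
    have h7' : (7:ℤ) * (7*u''^2) = 7 * (7*s'^4 + 42*s'^2*v^2 - v^4) := by
      linear_combination h2
    exact mul_left_cancel₀ (by norm_num) h7'
  have h7v : (7:ℤ) ∣ v := by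
    apply prime7.dvd_of_dvd_pow (n := 4)
    exact ⟨s'^4 + 6*s'^2*v^2 - u''^2, by linear_combination h3⟩
  have := hcop.isUnit_of_dvd' (Dvd.intro s' rfl) h7v
  rw [Int.isUnit_iff] at this
  omega

lemma no7z {w z m : ℤ} (hcop : IsCoprime z m)
    (h : w^2 = z^4 - 147*z^2*m^2 + 5488*m^4) : ¬ (7:ℤ) ∣ z := by
  intro h7
  obtain ⟨z', rfl⟩ := h7
  have h7w : (7:ℤ) ∣ w := by
    apply prime7.dvd_of_dvd_pow (n := 2)
    exact ⟨343*z'^4 - 1029*z'^2*m^2 + 784*m^4, by linear_combination h⟩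
  obtain ⟨w', rfl⟩ := h7w
  have h2 : w'^2 = 49*z'^4 - 147*z'^2*m^2 + 112*m^4 := by
    have h49 : (49:ℤ) * w'^2 = 49 * (49*z'^4 - 147*z'^2*m^2 + 112*m^4) := by
      linear_combination h
    exact mul_left_cancel₀ (by norm_num) h49
  have h7w' : (7:ℤ) ∣ w' := by
    apply prime7.dvd_of_dvd_pow (n := 2)
    exact ⟨7*z'^4 - 21*z'^2*m^2 + 16*m^4, by linear_combination h2⟩
  obtain ⟨w'', rfl⟩ := h7w'
  have h3 : 7*w''^2 = 7*z'^4 - 21*z'^2*m^2 + 16*m^4 := by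
    have h7' : (7:ℤ) * (7*w''^2) = 7 * (7*z'^4 - 21*z'^2*m^2 + 16*m^4) := by
      linear_combination h2
    exact mul_left_cancel₀ (by norm_num) h7'
  have h7m : (7:ℤ) ∣ m := by
    apply prime7.dvd_of_dvd_pow (n := 4)
    have h16 : (7:ℤ) ∣ 16*m^4 := ⟨w''^2 - z'^4 + 3*z'^2*m^2, by linear_combination -h3⟩
    rcases (Prime.dvd_mul prime7).mp h16 with h'|h'
    · norm_num at h'
    · exact h'
  have := hcop.isUnit_of_dvd' (Dvd.intro z' rfl) h7m
  rw [Int.isUnit_iff] at this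
  omega

lemma no7T3 {s e f : ℤ} (hcop : IsCoprime e f)
    (h : s^2 = 343*e^4 - 147*e^2*f^2 + 16*f^4)
    (h7f : (7:ℤ) ∣ f) (h7s : (7:ℤ) ∣ s) : False := by
  obtain ⟨f', rfl⟩ := h7f
  obtain ⟨s', rfl⟩ := h7s
  have h2 : s'^2 = 7*e^4 - 147*e^2*f'^2 + 784*f'^4 := by
    have h49 : (49:ℤ) * s'^2 = 49 * (7*e^4 - 147*e^2*f'^2 + 784*f'^4) := by
      linear_combination h
    exact mul_left_cancel₀ (by norm_num) h49
  have h7s' : (7:ℤ) ∣ s' := by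
    apply prime7.dvd_of_dvd_pow (n := 2)
    exact ⟨e^4 - 21*e^2*f'^2 + 112*f'^4, by linear_combination h2⟩
  obtain ⟨s'', rfl⟩ := h7s'
  have h3 : 7*s''^2 = e^4 - 21*e^2*f'^2 + 112*f'^4 := by
    have h7' : (7:ℤ) * (7*s''^2) = 7 * (e^4 - 21*e^2*f'^2 + 112*f'^4) := by
      linear_combination h2
    exact mul_left_cancel₀ (by norm_num) h7'
  have h7e : (7:ℤ) ∣ e := by
    apply prime7.dvd_of_dvd_pow (n := 4)
    exact ⟨s''^2 + 3*e^2*f'^2 - 16*f'^4, by linear_combination -h3⟩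
  have := hcop.isUnit_of_dvd' h7e (Dvd.intro f' rfl)
  rw [Int.isUnit_iff] at this
  omega

/-! ### The coprime factorization lemma for `X * Y = 343 * m⁴` -/

lemma nat_factor_aux (x y n : ℕ) (hn : n ≠ 0) (hcop : Nat.Coprime x y)
    (heq : x * y = 343 * n^4) (h7 : 7 ∣ x) :
    ∃ e f : ℕ, x = 343 * e^4 ∧ y = f^4 ∧ e * f = n := by
  obtain ⟨k, n₁, hn₁, rfl⟩ := Nat.exists_eq_pow_mul_and_not_dvd hn 7 (by norm_num)
  have h7y : ¬ 7 ∣ y := by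
    intro hy
    have h1 : 7 ∣ Nat.gcd x y := Nat.dvd_gcd h7 hy
    rw [hcop] at h1
    omega
  have heq' : x * y = 7^(3+4*k) * n₁^4 := by
    rw [heq, mul_pow, ← pow_mul, pow_add, Nat.mul_comm k 4]
    ring_nf
  have hdvd : 7^(3+4*k) ∣ x := by
    apply Nat.Coprime.dvd_of_dvd_mul_right
      (Nat.Coprime.pow_left _ ((Nat.Prime.coprime_iff_not_dvd (by norm_num)).mpr h7y))
    exact ⟨n₁^4, heq'⟩
  obtain ⟨x₁, rfl⟩ := hdvd
  have hxy : x₁ * y = n₁^4 := by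
    have hpos : 0 < 7^(3+4*k) := Nat.pow_pos (by norm_num)
    apply Nat.eq_of_mul_eq_mul_left hpos
    rw [← mul_assoc, heq']
  have hc1 : Nat.Coprime x₁ y :=
    Nat.Coprime.coprime_dvd_left ⟨7^(3+4*k), mul_comm _ _⟩ hcop
  obtain ⟨e₁, he₁⟩ := exists_eq_pow_of_mul_eq_pow (α := ℕ)
    (Nat.isUnit_iff.mpr hc1) hxy
  obtain ⟨f, hf⟩ := exists_eq_pow_of_mul_eq_pow (α := ℕ)
    (Nat.isUnit_iff.mpr hc1.symm) (by rw [mul_comm]; exact hxy)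
  have hef : (e₁ * f)^4 = n₁^4 := by rw [mul_pow, ← he₁, ← hf, hxy]
  have hef' : e₁ * f = n₁ := Nat.pow_left_injective (by norm_num) hef
  refine ⟨7^k * e₁, f, ?_, hf, ?_⟩
  · rw [he₁, mul_pow, ← pow_mul, pow_add, Nat.mul_comm k 4]
    ring_nf
  · rw [mul_assoc, hef']

lemma factor343 {X Y m : ℤ} (hX : 0 < X) (hY : 0 < Y) (hm : m ≠ 0)
    (hcop : IsCoprime X Y) (heq : X * Y = 343 * m^4) :
    ∃ e f : ℤ, e^2 * f^2 = m^2 ∧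
      ((X = e^4 ∧ Y = 343*f^4) ∨ (X = 343*e^4 ∧ Y = f^4)) := by
  have hx : ((X.natAbs : ℤ)) = X := Int.natAbs_of_nonneg hX.le
  have hy : ((Y.natAbs : ℤ)) = Y := Int.natAbs_of_nonneg hY.le
  have habs4 : |m|^4 = m^4 := by
    rw [show |m|^4 = (|m|^2)^2 by ring, sq_abs]; ring
  have heqn : X.natAbs * Y.natAbs = 343 * m.natAbs^4 := by
    have : ((X.natAbs * Y.natAbs : ℕ) : ℤ) = ((343 * m.natAbs^4 : ℕ) : ℤ) := by
      push_cast
      rw [abs_of_pos hX, abs_of_pos hY, habs4, heq]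
    exact_mod_cast this
  have hcopn : Nat.Coprime X.natAbs Y.natAbs :=
    Int.isCoprime_iff_gcd_eq_one.mp hcop
  have hn0 : m.natAbs ≠ 0 := Int.natAbs_ne_zero.mpr hm
  have h7xy : 7 ∣ X.natAbs * Y.natAbs := ⟨49 * m.natAbs^4, by rw [heqn]; ring⟩
  rcases (Nat.Prime.dvd_mul (by norm_num)).mp h7xy with h7|h7
  · obtain ⟨e, f, hx', hy', hef⟩ := nat_factor_aux _ _ _ hn0 hcopn heqn h7
    refine ⟨(e:ℤ), (f:ℤ), ?_, Or.inr ⟨?_, ?_⟩⟩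
    · have : ((e*f : ℕ) : ℤ)^2 = ((m.natAbs : ℤ))^2 := by rw [hef]
      push_cast at this
      rw [sq_abs] at this
      linear_combination this
    · rw [← hx, hx']; push_cast; ring
    · rw [← hy, hy']; push_cast; ring
  · obtain ⟨e, f, hy', hx', hef⟩ := nat_factor_aux _ _ _ hn0 hcopn.symm
      (by rw [mul_comm]; exact heqn) h7
    refine ⟨(f:ℤ), (e:ℤ), ?_, Or.inl ⟨?_, ?_⟩⟩
    · have : ((e*f : ℕ) : ℤ)^2 = ((m.natAbs : ℤ))^2 := by rw [hef]
      push_cast at this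
      rw [sq_abs] at this
      linear_combination this
    · rw [← hx, hx']; push_cast; ring
    · rw [← hy, hy']; push_cast; ring

/-! ### Death mod 128 : `u² = s⁴+294s²v²-343v⁴` with `s, v` odd -/

lemma A1 {u s v : ℤ} (hs : Odd s) (hv : Odd v)
    (h : u^2 = s^4 + 294*s^2*v^2 - 343*v^4) : False := by
  obtain ⟨a, rfl⟩ := hs
  obtain ⟨b, rfl⟩ := hv
  have hc := congrArg (fun n : ℤ => (n : ZMod 128)) h
  push_cast at hc
  refine decsq (u : ZMod 128) ?_
  calc ((u : ZMod 128))^2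
      = (2*(a:ZMod 128)+1)^4 + 294*(2*(a:ZMod 128)+1)^2*(2*(b:ZMod 128)+1)^2
        - 343*(2*(b:ZMod 128)+1)^4 := by linear_combination hc
    _ = 80 := dec80 _ _


/-! ### More helpers -/

lemma eq_seven_of_dvd_343 {p : ℕ} (hp : p.Prime) (h : (p:ℤ) ∣ 343) : p = 7 := by
  have h' : p ∣ 343 := by exact_mod_cast h
  have h2 : p ∣ 7 ^ 3 := by rw [show (7:ℕ)^3 = 343 from rfl]; exact h'
  exact (Nat.prime_dvd_prime_iff_eq hp (by norm_num)).mp (hp.dvd_of_dvd_pow h2)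

lemma odd_prime_dvd_halve {p : ℕ} (hp : p.Prime) (hp2 : p ≠ 2) {x : ℤ}
    (h : (p:ℤ) ∣ 2*x) : (p:ℤ) ∣ x :=
  ((isCoprime_two_odd (int_odd_of_prime_ne_two hp hp2)).symm).dvd_of_dvd_mul_left h

lemma odd_prime_dvd_unpow {p : ℕ} (hp : p.Prime) (hp2 : p ≠ 2) {x : ℤ} (j : ℕ)
    (h : (p:ℤ) ∣ 2^j*x) : (p:ℤ) ∣ x :=
  ((isCoprime_pow_two_odd j (int_odd_of_prime_ne_two hp hp2)).symm).dvd_of_dvd_mul_left h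

lemma odd_abs {a : ℤ} (h : Odd a) : Odd |a| := by
  rcases abs_choice a with h'|h'
  · rw [h']; exact h
  · rw [h']; exact h.neg

lemma odd_ne_zero {a : ℤ} (h : Odd a) : a ≠ 0 := by
  rintro rfl; simp at h

/-! ### Death of `w² = z⁴ - 147z²m² + 5488m⁴` with `m` odd -/

lemma T2odd {w z m : ℤ} (hm : Odd m) (hcop : IsCoprime z m)
    (h : w^2 = z^4 - 147*z^2*m^2 + 5488*m^4) : False := by
  have h7z : ¬ (7:ℤ) ∣ z := no7z hcop h
  have hm0 : m ≠ 0 := odd_ne_zero hm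
  have hw0sq : |w|^2 = w^2 := sq_abs w
  have key : (2*|w| - (2*z^2 - 147*m^2)) * (2*|w| + (2*z^2 - 147*m^2)) = 343 * m^4 := by
    linear_combination 4*hw0sq + 4*h
  have hprod : (0:ℤ) < 343*m^4 :=
    lt_of_le_of_ne (by positivity) (Ne.symm (mul_ne_zero (by norm_num) (pow_ne_zero _ hm0)))
  obtain ⟨hP, hQ⟩ := both_pos key hprod (by linarith [abs_nonneg w])
  have hD_odd : Odd (2*z^2 - 147*m^2) :=
    (even_two_mul _).sub_odd ((by decide : Odd (147:ℤ)).mul hm.pow)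
  have hPodd : Odd (2*|w| - (2*z^2 - 147*m^2)) := (even_two_mul _).sub_odd hD_odd
  have hQodd : Odd (2*|w| + (2*z^2 - 147*m^2)) := (even_two_mul _).add_odd hD_odd
  have hcopPQ : IsCoprime (2*|w| - (2*z^2 - 147*m^2)) (2*|w| + (2*z^2 - 147*m^2)) := by
    apply coprime_of_prime (ne_of_gt hP)
    intro p hp hp1 hp2
    have hp2' : p ≠ 2 := prime_ne_two_of_dvd_odd hp hPodd hp1
    have hpz : Prime (p:ℤ) := Nat.prime_iff_prime_int.mp hp
    have hdvd_D : (p:ℤ) ∣ (2*z^2 - 147*m^2) := by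
      apply odd_prime_dvd_halve hp hp2'
      have := dvd_sub hp2 hp1
      rw [show (2*|w| + (2*z^2 - 147*m^2)) - (2*|w| - (2*z^2 - 147*m^2))
          = 2*(2*z^2 - 147*m^2) by ring] at this
      exact this
    have hdvd_prod : (p:ℤ) ∣ 343*m^4 := key ▸ hp1.mul_right _
    rcases hpz.dvd_mul.mp hdvd_prod with h343|hm4
    · have hp7 : p = 7 := eq_seven_of_dvd_343 hp h343
      subst hp7
      have h2z : (7:ℤ) ∣ 2*z^2 := by
        have : (7:ℤ) ∣ (2*z^2 - 147*m^2) + 147*m^2 := dvd_add hdvd_D ⟨21*m^2, by ring⟩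
        simpa using this
      exact h7z (prime7.dvd_of_dvd_pow (odd_prime_dvd_halve hp (by norm_num) h2z))
    · have hpm : (p:ℤ) ∣ m := hpz.dvd_of_dvd_pow hm4
      have hpz' : (p:ℤ) ∣ z := by
        apply hpz.dvd_of_dvd_pow (n := 2)
        apply odd_prime_dvd_halve hp hp2'
        have : (p:ℤ) ∣ (2*z^2 - 147*m^2) + 147*m^2 :=
          dvd_add hdvd_D ((dvd_pow hpm (by norm_num)).mul_left 147)
        simpa using this
      exact not_isUnit_int_prime hp (hcop.isUnit_of_dvd' hpz' hpm)
  obtain ⟨e, f, hef, hcase⟩ := factor343 hP hQ hm0 hcopPQ key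
  rcases hcase with ⟨hPe, hQf⟩ | ⟨hPe, hQf⟩
  · have he : Odd e := odd_of_odd_pow (by norm_num) (hPe ▸ hPodd)
    have hf : Odd f := odd_of_odd_pow (by norm_num) (Int.odd_mul.mp (hQf ▸ hQodd)).2
    have heq4 : 4*z^2 = 343*f^4 + 294*e^2*f^2 - e^4 := by
      linear_combination hQf - hPe - 294*hef
    obtain ⟨i, rfl⟩ := he
    obtain ⟨j, rfl⟩ := hf
    have hc := congrArg (fun n : ℤ => (n : ZMod 16)) heq4
    push_cast at hc
    exact dec16 (z : ZMod 16) (i : ZMod 16) (j : ZMod 16) (by linear_combination hc)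
  · have he : Odd e := odd_of_odd_pow (by norm_num) (Int.odd_mul.mp (hPe ▸ hPodd)).2
    have hf : Odd f := odd_of_odd_pow (by norm_num) (hQf ▸ hQodd)
    have heq4 : (2*z)^2 = f^4 + 294*f^2*e^2 - 343*e^4 := by
      linear_combination hQf - hPe - 294*hef
    exact A1 hf he heq4

/-! ### Death of `s² = 343e⁴ - 147e²f² + 16f⁴` with `e, f` odd coprime -/

lemma T3dead {s e f : ℤ} (he : Odd e) (hf : Odd f) (hcop : IsCoprime e f)
    (h : s^2 = 343*e^4 - 147*e^2*f^2 + 16*f^4) : False := by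
  have he0 : e ≠ 0 := odd_ne_zero he
  have hs0sq : |s|^2 = s^2 := sq_abs s
  have key : (8*|s| - (32*f^2 - 147*e^2)) * (8*|s| + (32*f^2 - 147*e^2)) = 343 * e^4 := by
    linear_combination 64*hs0sq + 64*h
  have hprod : (0:ℤ) < 343*e^4 :=
    lt_of_le_of_ne (by positivity) (Ne.symm (mul_ne_zero (by norm_num) (pow_ne_zero _ he0)))
  obtain ⟨hP, hQ⟩ := both_pos key hprod (by linarith [abs_nonneg s])
  have hD_odd : Odd (32*f^2 - 147*e^2) :=
    (Even.sub_odd (⟨16*f^2, by ring⟩ : Even (32*f^2))) ((by decide : Odd (147:ℤ)).mul he.pow)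
  have hPodd : Odd (8*|s| - (32*f^2 - 147*e^2)) :=
    (Even.sub_odd (⟨4*|s|, by ring⟩ : Even (8*|s|))) hD_odd
  have hQodd : Odd (8*|s| + (32*f^2 - 147*e^2)) :=
    (Even.add_odd (⟨4*|s|, by ring⟩ : Even (8*|s|))) hD_odd
  have hcopPQ : IsCoprime (8*|s| - (32*f^2 - 147*e^2)) (8*|s| + (32*f^2 - 147*e^2)) := by
    apply coprime_of_prime (ne_of_gt hP)
    intro p hp hp1 hp2
    have hp2' : p ≠ 2 := prime_ne_two_of_dvd_odd hp hPodd hp1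
    have hpz : Prime (p:ℤ) := Nat.prime_iff_prime_int.mp hp
    have hdvd_s : (p:ℤ) ∣ s := by
      have h16 : (p:ℤ) ∣ 2^4*|s| := by
        have := dvd_add hp1 hp2
        rw [show (8*|s| - (32*f^2 - 147*e^2)) + (8*|s| + (32*f^2 - 147*e^2))
            = 2^4*|s| by ring] at this
        exact this
      exact (dvd_abs _ _).mp (odd_prime_dvd_unpow hp hp2' 4 h16)
    have hdvd_D : (p:ℤ) ∣ (32*f^2 - 147*e^2) := by
      apply odd_prime_dvd_halve hp hp2'
      have := dvd_sub hp2 hp1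
      rw [show (8*|s| + (32*f^2 - 147*e^2)) - (8*|s| - (32*f^2 - 147*e^2))
          = 2*(32*f^2 - 147*e^2) by ring] at this
      exact this
    have hdvd_prod : (p:ℤ) ∣ 343*e^4 := key ▸ hp1.mul_right _
    rcases hpz.dvd_mul.mp hdvd_prod with h343|he4
    · have hp7 : p = 7 := eq_seven_of_dvd_343 hp h343
      subst hp7
      have h32f : (7:ℤ) ∣ 2^5*f^2 := by
        have : (7:ℤ) ∣ (32*f^2 - 147*e^2) + 147*e^2 := dvd_add hdvd_D ⟨21*e^2, by ring⟩
        rw [show (32*f^2 - 147*e^2) + 147*e^2 = 2^5*f^2 by ring] at this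
        exact this
      have h7f : (7:ℤ) ∣ f :=
        prime7.dvd_of_dvd_pow (odd_prime_dvd_unpow hp (by norm_num) 5 h32f)
      exact no7T3 hcop h h7f hdvd_s
    · have hpe : (p:ℤ) ∣ e := hpz.dvd_of_dvd_pow he4
      have hpf : (p:ℤ) ∣ f := by
        apply hpz.dvd_of_dvd_pow (n := 2)
        apply odd_prime_dvd_unpow hp hp2' 5
        have : (p:ℤ) ∣ (32*f^2 - 147*e^2) + 147*e^2 :=
          dvd_add hdvd_D ((dvd_pow hpe (by norm_num)).mul_left 147)
        rw [show (32*f^2 - 147*e^2) + 147*e^2 = 2^5*f^2 by ring] at this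
        exact this
      exact not_isUnit_int_prime hp (hcop.isUnit_of_dvd' hpe hpf)
  obtain ⟨g, h', hgh, hcase⟩ := factor343 hP hQ he0 hcopPQ key
  rcases hcase with ⟨hPg, hQh⟩ | ⟨hPg, hQh⟩
  · have hg : Odd g := odd_of_odd_pow (by norm_num) (hPg ▸ hPodd)
    have hh : Odd h' := odd_of_odd_pow (by norm_num) (Int.odd_mul.mp (hQh ▸ hQodd)).2
    have heq4 : 64*f^2 = 343*h'^4 + 294*g^2*h'^2 - g^4 := by
      linear_combination hQh - hPg - 294*hgh
    obtain ⟨i, rfl⟩ := hg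
    obtain ⟨j, rfl⟩ := hh
    have hc := congrArg (fun n : ℤ => (n : ZMod 8)) heq4
    push_cast at hc
    exact dec8T3 (f : ZMod 8) (i : ZMod 8) (j : ZMod 8) (by linear_combination hc)
  · have hg : Odd g := odd_of_odd_pow (by norm_num) (Int.odd_mul.mp (hPg ▸ hPodd)).2
    have hh : Odd h' := odd_of_odd_pow (by norm_num) (hQh ▸ hQodd)
    have heq4 : (8*f)^2 = h'^4 + 294*h'^2*g^2 - 343*g^4 := by
      linear_combination hQh - hPg - 294*hgh
    exact A1 hh hg heq4

/-! ### Death of T1 with v odd -/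

lemma voddDead {u s v : ℤ} (hv : Odd v) (hcop : IsCoprime s v)
    (h : u^2 = s^4 + 294*s^2*v^2 - 343*v^4) : False := by
  rcases Int.even_or_odd s with hse | hso
  swap
  · exact A1 hso hv h
  have hv0 : v ≠ 0 := odd_ne_zero hv
  have h7s : ¬ (7:ℤ) ∣ s := no7s hcop h
  have hu_odd : Odd u := by
    apply odd_of_odd_pow (n := 2) (by norm_num)
    rw [h]
    obtain ⟨c, hc⟩ := hse
    obtain ⟨b, hb⟩ := hv
    subst hc; subst hb
    exact ⟨8*c^4 + 588*c^2*(2*b+1)^2 - 2744*b^4 - 5488*b^3 - 4116*b^2 - 1372*b - 172, by ring⟩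
  have hC_odd : Odd (s^2 + 147*v^2) := by
    obtain ⟨c, hc⟩ := hse
    obtain ⟨b, hb⟩ := hv
    subst hc; subst hb
    exact ⟨2*c^2 + 294*b^2 + 294*b + 73, by ring⟩
  have hu0 : Odd |u| := odd_abs hu_odd
  have key : (s^2 + 147*v^2 - |u|) * (s^2 + 147*v^2 + |u|) = 21952 * v^4 := by
    linear_combination -(sq_abs u) - h
  have hprod : (0:ℤ) < 21952*v^4 :=
    lt_of_le_of_ne (by positivity) (Ne.symm (mul_ne_zero (by norm_num) (pow_ne_zero _ hv0)))
  obtain ⟨hA, hB⟩ := both_pos key hprod (by linarith [abs_nonneg u, sq_nonneg s, sq_nonneg v])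
  obtain ⟨a₁, ha₁⟩ := hC_odd.sub_odd hu0
  obtain ⟨b₁, hb₁⟩ := hC_odd.add_odd hu0
  have ha₁pos : 0 < a₁ := by linarith
  have hb₁pos : 0 < b₁ := by linarith
  have hsum : a₁ + b₁ = s^2 + 147*v^2 := by linarith
  have hprod1 : a₁ * b₁ = 5488*v^4 := by
    rw [ha₁, hb₁] at key
    have h4 : (4:ℤ) * (a₁*b₁) = 4 * (5488*v^4) := by linear_combination key
    exact mul_left_cancel₀ (by norm_num) h4
  have claim : ∀ a b : ℤ, 0 < a → 0 < b → Odd a → a + b = s^2 + 147*v^2 →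
      a * b = 5488*v^4 → False := by
    intro a b hapos hbpos haodd hab hprod2
    have hcop_ab : IsCoprime a b := by
      apply coprime_of_prime (ne_of_gt hapos)
      intro p hp h1 h2
      have hp2 : p ≠ 2 := prime_ne_two_of_dvd_odd hp haodd h1
      have hpz : Prime (p:ℤ) := Nat.prime_iff_prime_int.mp hp
      have hdC : (p:ℤ) ∣ s^2 + 147*v^2 := hab ▸ dvd_add h1 h2
      have hdprod : (p:ℤ) ∣ 2^4*(343*v^4) := by
        rw [show (2:ℤ)^4*(343*v^4) = 5488*v^4 by ring, ← hprod2]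
        exact h1.mul_right _
      have hd343v : (p:ℤ) ∣ 343*v^4 := odd_prime_dvd_unpow hp hp2 4 hdprod
      rcases hpz.dvd_mul.mp hd343v with h343|hv4
      · have hp7 : p = 7 := eq_seven_of_dvd_343 hp h343
        subst hp7
        apply h7s
        apply prime7.dvd_of_dvd_pow (n := 2)
        have hd : (7:ℤ) ∣ (s^2 + 147*v^2) - 147*v^2 := dvd_sub hdC ⟨21*v^2, by ring⟩
        rw [show (s^2+147*v^2) - 147*v^2 = s^2 by ring] at hd
        exact hd
      · have hpv : (p:ℤ) ∣ v := hpz.dvd_of_dvd_pow hv4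
        have hps : (p:ℤ) ∣ s := by
          apply hpz.dvd_of_dvd_pow (n := 2)
          have hd : (p:ℤ) ∣ (s^2 + 147*v^2) - 147*v^2 :=
            dvd_sub hdC ((dvd_pow hpv (by norm_num)).mul_left 147)
          rw [show (s^2+147*v^2) - 147*v^2 = s^2 by ring] at hd
          exact hd
        exact not_isUnit_int_prime hp (hcop.isUnit_of_dvd' hps hpv)
    have h16 : ((2:ℤ)^4) ∣ b := by
      apply (isCoprime_pow_two_odd 4 haodd).dvd_of_dvd_mul_left
      exact ⟨343*v^4, by linear_combination hprod2⟩
    obtain ⟨Y, hY⟩ := h16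
    have hYpos : 0 < Y := by
      have hb' : (0:ℤ) < 2^4*Y := hY ▸ hbpos
      linarith
    have hprodY : a * Y = 343*v^4 := by
      have h16' : ((2:ℤ)^4) * (a*Y) = 2^4 * (343*v^4) := by
        linear_combination hprod2 - a*hY
      exact mul_left_cancel₀ (by norm_num) h16'
    have hcop_aY : IsCoprime a Y := hcop_ab.of_isCoprime_of_dvd_right ⟨2^4, by rw [hY]; ring⟩
    have hYodd : Odd Y := by
      have hmul : Odd (a*Y) := by
        rw [hprodY]; exact (by decide : Odd (343:ℤ)).mul hv.pow
      exact (Int.odd_mul.mp hmul).2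
    obtain ⟨e, f, hef, hcase⟩ := factor343 hapos hYpos hv0 hcop_aY hprodY
    rcases hcase with ⟨hae, hYf⟩ | ⟨hae, hYf⟩
    · have hf : Odd f := odd_of_odd_pow (by norm_num) (Int.odd_mul.mp (hYf ▸ hYodd)).2
      have hcop_ef : IsCoprime e f := by
        have h1 : IsCoprime (e^4) (343*f^4) := by rw [← hae, ← hYf]; exact hcop_aY
        exact (h1.of_isCoprime_of_dvd_left ⟨e^3, by ring⟩).of_isCoprime_of_dvd_right
          ⟨343*f^3, by ring⟩
      have heq2 : s^2 = e^4 - 147*e^2*f^2 + 5488*f^4 := by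
        linear_combination -hab + hae + hY + 16*hYf + 147*hef
      exact T2odd hf hcop_ef heq2
    · have he : Odd e := odd_of_odd_pow (by norm_num) (Int.odd_mul.mp (hae ▸ haodd)).2
      have hf : Odd f := odd_of_odd_pow (by norm_num) (hYf ▸ hYodd)
      have hcop_ef : IsCoprime e f := by
        have h1 : IsCoprime (343*e^4) (f^4) := by rw [← hae, ← hYf]; exact hcop_aY
        exact (h1.of_isCoprime_of_dvd_left ⟨343*e^3, by ring⟩).of_isCoprime_of_dvd_right
          ⟨f^3, by ring⟩
      have heq2 : s^2 = 343*e^4 - 147*e^2*f^2 + 16*f^4 := by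
        linear_combination -hab + hae + hY + 16*hYf + 147*hef
      exact T3dead he hf hcop_ef heq2
  rcases Int.even_or_odd a₁ with ha|ha
  · have hb : Odd b₁ := by
      rcases Int.even_or_odd b₁ with hb'|hb'
      · exfalso
        have heven : Even (a₁+b₁) := ha.add hb'
        rw [hsum] at heven
        exact (Int.not_odd_iff_even.mpr heven) hC_odd
      · exact hb'
    exact claim b₁ a₁ hb₁pos ha₁pos hb (by linarith) (by linear_combination hprod1)
  · exact claim a₁ b₁ ha₁pos hb₁pos ha hsum hprod1

/-! ### The descent step: T2 with even m produces a smaller T1 solution -/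

lemma T2even {w z f : ℤ} (K : ℕ) (hf : Odd f) (hz : Odd z)
    (hcop : IsCoprime z (2^(K+1)*f))
    (h : w^2 = z^4 - 147*z^2*(2^(K+1)*f)^2 + 5488*(2^(K+1)*f)^4) :
    ∃ u' s' g : ℤ, IsCoprime s' g ∧ g ≠ 0 ∧
      g.natAbs < (2^(K+1)*f).natAbs ∧ u'^2 = s'^4 + 294*s'^2*g^2 - 343*g^4 := by
  have h7z : ¬ (7:ℤ) ∣ z := no7z hcop h
  have hf0 : f ≠ 0 := odd_ne_zero hf
  have habs : (2^(K+1)*f).natAbs = 2^(K+1) * f.natAbs := by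
    rw [Int.natAbs_mul, Int.natAbs_pow]
    rfl
  -- rewrite in terms of the atom 2^K
  have hpow : (2:ℤ)^(K+1) = 2*2^K := by rw [pow_succ]; ring
  rw [hpow] at h hcop
  have hw_odd : Odd w := by
    apply odd_of_odd_pow (n := 2) (by norm_num)
    rw [h]
    obtain ⟨a, ha⟩ := hz
    subst ha
    refine ⟨8*a^4 + 16*a^3 + 12*a^2 + 4*a - 294*(2*a+1)^2*(2^K*f)^2
      + 43904*(2^K*f)^4, by ring⟩
  have hw0 : Odd |w| := odd_abs hw_odd
  have key : (|w| - (z^2 - 294*(2^K)^2*f^2)) * (|w| + (z^2 - 294*(2^K)^2*f^2))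
      = 1372*((2^K)^4*f^4) := by
    linear_combination (sq_abs w) + h
  have hprod : (0:ℤ) < 1372*((2^K)^4*f^4) := by
    have h1 : ((2:ℤ)^K)^4*f^4 ≠ 0 :=
      mul_ne_zero (pow_ne_zero _ (pow_ne_zero _ two_ne_zero)) (pow_ne_zero _ hf0)
    exact lt_of_le_of_ne (by positivity) (Ne.symm (mul_ne_zero (by norm_num) h1))
  obtain ⟨hP, hQ⟩ := both_pos key hprod (by linarith [abs_nonneg w])
  have hd_odd : Odd (z^2 - 294*(2^K)^2*f^2) :=
    Odd.sub_even hz.pow ⟨147*(2^K)^2*f^2, by ring⟩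
  obtain ⟨p₁, hp₁⟩ := hw0.sub_odd hd_odd
  obtain ⟨q₁, hq₁⟩ := hw0.add_odd hd_odd
  have hp₁pos : 0 < p₁ := by linarith
  have hq₁pos : 0 < q₁ := by linarith
  have hsum : p₁ + q₁ = |w| := by linarith
  have hdiff : q₁ - p₁ = z^2 - 294*(2^K)^2*f^2 := by linarith
  have hprod1 : p₁ * q₁ = 343*((2^K)^4*f^4) := by
    rw [hp₁, hq₁] at key
    have h4 : (4:ℤ) * (p₁*q₁) = 4 * (343*((2^K)^4*f^4)) := by linear_combination key
    exact mul_left_cancel₀ (by norm_num) h4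
  have claim : ∀ p q : ℤ, 0 < p → 0 < q → Odd p → p + q = |w| →
      p * q = 343*((2^K)^4*f^4) →
      (q - p = z^2 - 294*(2^K)^2*f^2 ∨ p - q = z^2 - 294*(2^K)^2*f^2) →
      ∃ u' s' g : ℤ, IsCoprime s' g ∧ g ≠ 0 ∧
        g.natAbs < (2^(K+1)*f).natAbs ∧ u'^2 = s'^4 + 294*s'^2*g^2 - 343*g^4 := by
    intro p q hppos hqpos hpodd hsum2 hprod2 hdisj
    have hcop_pq : IsCoprime p q := by
      apply coprime_of_prime (ne_of_gt hppos)
      intro r hr h1 h2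
      have hr2 : r ≠ 2 := prime_ne_two_of_dvd_odd hr hpodd h1
      have hrz : Prime (r:ℤ) := Nat.prime_iff_prime_int.mp hr
      have hdd : (r:ℤ) ∣ z^2 - 294*(2^K)^2*f^2 := by
        rcases hdisj with hd|hd
        · rw [← hd]; exact dvd_sub h2 h1
        · rw [← hd]; exact dvd_sub h1 h2
      have hdz2 : (r:ℤ) ∣ f → (r:ℤ) ∣ z := by
        intro hrf
        apply hrz.dvd_of_dvd_pow (n := 2)
        have hd : (r:ℤ) ∣ (z^2 - 294*(2^K)^2*f^2) + 294*(2^K)^2*f^2 :=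
          dvd_add hdd (((dvd_pow hrf (by norm_num)).mul_left _))
        rw [show (z^2 - 294*(2^K)^2*f^2) + 294*(2^K)^2*f^2 = z^2 by ring] at hd
        exact hd
      have hdprod : (r:ℤ) ∣ 343*((2^K)^4*f^4) := hprod2 ▸ h1.mul_right _
      rcases hrz.dvd_mul.mp hdprod with h343|hrest
      · have hp7 : r = 7 := eq_seven_of_dvd_343 hr h343
        subst hp7
        apply h7z
        apply prime7.dvd_of_dvd_pow (n := 2)
        have hd : (7:ℤ) ∣ (z^2 - 294*(2^K)^2*f^2) + 294*(2^K)^2*f^2 :=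
          dvd_add hdd ⟨42*(2^K)^2*f^2, by ring⟩
        rw [show (z^2 - 294*(2^K)^2*f^2) + 294*(2^K)^2*f^2 = z^2 by ring] at hd
        exact hd
      · rcases hrz.dvd_mul.mp hrest with h2K|hf4
        · exfalso
          have : (r:ℤ) ∣ 2 := hrz.dvd_of_dvd_pow (hrz.dvd_of_dvd_pow h2K)
          have : r ∣ 2 := by exact_mod_cast this
          have := (Nat.prime_dvd_prime_iff_eq hr (by norm_num)).mp this
          exact hr2 this
        · have hrf : (r:ℤ) ∣ f := hrz.dvd_of_dvd_pow hf4
          have hrz' : (r:ℤ) ∣ z := hdz2 hrf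
          have hrm : (r:ℤ) ∣ 2*2^K*f := hrf.mul_left _
          exact not_isUnit_int_prime hr (hcop.isUnit_of_dvd' hrz' hrm)
    have h2K4 : ((2:ℤ)^K)^4 ∣ q := by
      have hc2 : IsCoprime (((2:ℤ)^K)^4) p := by
        rw [← pow_mul]
        exact isCoprime_pow_two_odd _ hpodd
      apply hc2.dvd_of_dvd_mul_left
      exact ⟨343*f^4, by linear_combination hprod2⟩
    obtain ⟨Y, hY⟩ := h2K4
    have h2K4pos : (0:ℤ) < ((2:ℤ)^K)^4 := by positivity
    have hYpos : 0 < Y := by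
      have hq' : (0:ℤ) < ((2:ℤ)^K)^4*Y := hY ▸ hqpos
      rcases lt_trichotomy Y 0 with h'|h'|h'
      · have := mul_neg_of_pos_of_neg h2K4pos h'
        linarith
      · rw [h'] at hq'; simp at hq'
      · exact h'
    have hprodY : p * Y = 343*f^4 := by
      have hc : (((2:ℤ)^K)^4) * (p*Y) = ((2:ℤ)^K)^4 * (343*f^4) := by
        linear_combination hprod2 - p*hY
      exact mul_left_cancel₀ (ne_of_gt h2K4pos) hc
    have hcop_pY : IsCoprime p Y := hcop_pq.of_isCoprime_of_dvd_right ⟨(2^K)^4, by rw [hY]; ring⟩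
    have hYodd : Odd Y := by
      have hmul : Odd (p*Y) := by
        rw [hprodY]; exact (by decide : Odd (343:ℤ)).mul hf.pow
      exact (Int.odd_mul.mp hmul).2
    obtain ⟨e, f', hef, hcase⟩ := factor343 hppos hYpos hf0 hcop_pY hprodY
    -- natAbs size facts
    have hnat : e.natAbs^2 * f'.natAbs^2 = f.natAbs^2 := by
      have := congrArg Int.natAbs hef
      simpa [Int.natAbs_mul, Int.natAbs_pow] using this
    have hz7 : ((z : ZMod 7)) ≠ 0 := fun h0 =>
      h7z ((ZMod.intCast_zmod_eq_zero_iff_dvd z 7).mp h0)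
    rcases hcase with ⟨hpe, hYf⟩ | ⟨hpe, hYf⟩
    · -- p = e⁴, Y = 343 f'⁴
      have he : Odd e := odd_of_odd_pow (by norm_num) (hpe ▸ hpodd)
      have hf' : Odd f' := odd_of_odd_pow (by norm_num) (Int.odd_mul.mp (hYf ▸ hYodd)).2
      have hfle : f'.natAbs ≤ f.natAbs := by
        have he1 : 1 ≤ e.natAbs^2 := Nat.one_le_iff_ne_zero.mpr
          (pow_ne_zero _ (Int.natAbs_ne_zero.mpr (odd_ne_zero he)))
        have h1 : f'.natAbs^2 ≤ f.natAbs^2 := by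
          calc f'.natAbs^2 = 1 * f'.natAbs^2 := (one_mul _).symm
          _ ≤ e.natAbs^2 * f'.natAbs^2 := Nat.mul_le_mul_right _ he1
          _ = f.natAbs^2 := hnat
        exact (Nat.pow_le_pow_iff_left (by norm_num)).mp h1
      rcases hdisj with hd|hd
      · -- q - p = d₀ : mod-7 kill
        exfalso
        have heqk : z^2 = 343*(2^K*f')^4 - e^4 + 294*e^2*(2^K*f')^2 := by
          linear_combination -hd - hpe + hY + ((2:ℤ)^K)^4*hYf - 294*((2:ℤ)^K)^2*hef
        have hc7 := congrArg (fun n : ℤ => (n : ZMod 7)) heqk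
        push_cast at hc7
        exact (dec7 (z : ZMod 7) (e : ZMod 7) ((2:ZMod 7)^K*(f' : ZMod 7)) hz7)
          (by linear_combination hc7)
      · -- p - q = d₀ : descent output ⟨z, e, 2^K f'⟩
        refine ⟨z, e, 2^K*f', ?_, ?_, ?_, ?_⟩
        · have h1 : IsCoprime (e^4) (343*f'^4) := by rw [← hpe, ← hYf]; exact hcop_pY
          have h2 : IsCoprime e f' :=
            (h1.of_isCoprime_of_dvd_left ⟨e^3, by ring⟩).of_isCoprime_of_dvd_right
              ⟨343*f'^3, by ring⟩
          exact IsCoprime.mul_right ((isCoprime_pow_two_odd K he).symm) h2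
        · exact mul_ne_zero (pow_ne_zero _ two_ne_zero) (odd_ne_zero hf')
        · have habs2 : (2^K*f' : ℤ).natAbs = 2^K * f'.natAbs := by
            rw [Int.natAbs_mul, Int.natAbs_pow]; rfl
          rw [habs, habs2]
          have h2Kpos : 0 < 2^K := Nat.pow_pos (by norm_num)
          have hf1 : 1 ≤ f.natAbs := Nat.one_le_iff_ne_zero.mpr (Int.natAbs_ne_zero.mpr hf0)
          calc 2^K * f'.natAbs ≤ 2^K * f.natAbs := Nat.mul_le_mul_left _ hfle
            _ < 2^(K+1) * f.natAbs := by
                have h2 : 2^(K+1)*f.natAbs = 2*(2^K*f.natAbs) := by rw [pow_succ]; ring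
                have h3 : 0 < 2^K * f.natAbs := Nat.mul_pos h2Kpos hf1
                omega
        · linear_combination -hd + hpe - hY - ((2:ℤ)^K)^4*hYf - 294*((2:ℤ)^K)^2*hef
    · -- p = 343e⁴, Y = f'⁴
      have he : Odd e := odd_of_odd_pow (by norm_num) (Int.odd_mul.mp (hpe ▸ hpodd)).2
      have hf' : Odd f' := odd_of_odd_pow (by norm_num) (hYf ▸ hYodd)
      have hele : e.natAbs ≤ f.natAbs := by
        have hf1 : 1 ≤ f'.natAbs^2 := Nat.one_le_iff_ne_zero.mpr
          (pow_ne_zero _ (Int.natAbs_ne_zero.mpr (odd_ne_zero hf')))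
        have h1 : e.natAbs^2 ≤ f.natAbs^2 := by
          calc e.natAbs^2 = e.natAbs^2 * 1 := (mul_one _).symm
          _ ≤ e.natAbs^2 * f'.natAbs^2 := Nat.mul_le_mul_left _ hf1
          _ = f.natAbs^2 := hnat
        exact (Nat.pow_le_pow_iff_left (by norm_num)).mp h1
      rcases hdisj with hd|hd
      · -- q - p = d₀ : descent output ⟨z, 2^K f', e⟩
        refine ⟨z, 2^K*f', e, ?_, odd_ne_zero he, ?_, ?_⟩
        · have h1 : IsCoprime (343*e^4) (f'^4) := by rw [← hpe, ← hYf]; exact hcop_pY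
          have h2 : IsCoprime e f' :=
            (h1.of_isCoprime_of_dvd_left ⟨343*e^3, by ring⟩).of_isCoprime_of_dvd_right
              ⟨f'^3, by ring⟩
          exact IsCoprime.mul_left (isCoprime_pow_two_odd K he) h2.symm
        · rw [habs]
          have h2Kpos : 0 < 2^(K+1) := Nat.pow_pos (by norm_num)
          have hf1 : 1 ≤ f.natAbs := Nat.one_le_iff_ne_zero.mpr (Int.natAbs_ne_zero.mpr hf0)
          calc e.natAbs ≤ f.natAbs := hele
            _ < 2^(K+1) * f.natAbs := by
                have h2 : 2 ≤ 2^(K+1) := by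
                  calc 2 = 2^1 := rfl
                  _ ≤ 2^(K+1) := Nat.pow_le_pow_right (by norm_num) (by omega)
                calc f.natAbs < 2 * f.natAbs := by omega
                _ ≤ 2^(K+1) * f.natAbs := Nat.mul_le_mul_right _ h2
        · linear_combination -hd - hpe + hY + ((2:ℤ)^K)^4*hYf - 294*((2:ℤ)^K)^2*hef
      · -- p - q = d₀ : mod-7 kill
        exfalso
        have heqk : z^2 = 343*e^4 - (2^K*f')^4 + 294*(2^K*f')^2*e^2 := by
          linear_combination -hd + hpe - hY - ((2:ℤ)^K)^4*hYf - 294*((2:ℤ)^K)^2*hef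
        have hc7 := congrArg (fun n : ℤ => (n : ZMod 7)) heqk
        push_cast at hc7
        exact (dec7 (z : ZMod 7) ((2:ZMod 7)^K*(f' : ZMod 7)) (e : ZMod 7) hz7)
          (by linear_combination hc7)
  rcases Int.even_or_odd p₁ with hp|hp
  · have hqodd : Odd q₁ := by
      rcases Int.even_or_odd q₁ with hq'|hq'
      · exfalso
        have heven : Even (p₁+q₁) := hp.add hq'
        rw [hsum] at heven
        exact (Int.not_odd_iff_even.mpr heven) hw0
      · exact hq'
    exact claim q₁ p₁ hq₁pos hp₁pos hqodd (by linarith) (by linear_combination hprod1)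
      (Or.inr hdiff)
  · exact claim p₁ q₁ hp₁pos hq₁pos hp hsum hprod1 (Or.inl hdiff)

/-! ### The main descent: T1 has no solutions with v ≠ 0 -/

lemma T1rec : ∀ N : ℕ, ∀ u s v : ℤ, v.natAbs ≤ N → IsCoprime s v →
    u^2 = s^4 + 294*s^2*v^2 - 343*v^4 → v = 0 := by
  intro N
  induction N using Nat.strong_induction_on with
  | _ N IH =>
  intro u s v hN hcop h
  by_contra hv0
  rcases Int.even_or_odd v with hve | hvo
  swap
  · exact voddDead hvo hcop h
  have hso : Odd s := by
    rcases Int.even_or_odd s with h2|h2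
    · exfalso
      obtain ⟨c, hc⟩ := h2
      obtain ⟨d, hd⟩ := hve
      have hu2 : (2:ℤ) ∣ s := ⟨c, by omega⟩
      have hv2 : (2:ℤ) ∣ v := ⟨d, by omega⟩
      have := hcop.isUnit_of_dvd' hu2 hv2
      rw [Int.isUnit_iff] at this
      omega
    · exact h2
  have h7s : ¬ (7:ℤ) ∣ s := no7s hcop h
  have hvnat : v.natAbs ≠ 0 := Int.natAbs_ne_zero.mpr hv0
  obtain ⟨k, n₀, hn₀, hvfact⟩ := Nat.exists_eq_pow_mul_and_not_dvd hvnat 2 (by norm_num)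
  have hk0 : k ≠ 0 := by
    rintro rfl
    rw [pow_zero, one_mul] at hvfact
    obtain ⟨d, hd⟩ := hve
    have h2v : 2 ∣ v.natAbs := by
      have : (2:ℤ) ∣ v := ⟨d, by omega⟩
      exact Int.natAbs_dvd_natAbs.mpr this
    rw [hvfact] at h2v
    exact hn₀ h2v
  obtain ⟨K, rfl⟩ : ∃ K, k = K+1 := ⟨k-1, by omega⟩
  have hn₀odd : Odd n₀ := Nat.odd_iff.mpr (by omega)
  obtain ⟨v₁, hv₁odd, hveq, hv₁abs⟩ : ∃ v₁ : ℤ, Odd v₁ ∧ v = 2^(K+1)*v₁ ∧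
      v₁.natAbs = n₀ := by
    rcases Int.natAbs_eq v with hv | hv
    · refine ⟨(n₀:ℤ), Int.odd_coe_nat n₀ |>.mpr hn₀odd, ?_, by simp⟩
      rw [hv, hvfact]; push_cast; ring
    · refine ⟨-(n₀:ℤ), (Int.odd_coe_nat n₀ |>.mpr hn₀odd).neg, ?_, by simp⟩
      rw [hv, hvfact]; push_cast; ring
  have hv₁0 : v₁ ≠ 0 := odd_ne_zero hv₁odd
  have hvabs : v.natAbs = 2^(K+1) * v₁.natAbs := by
    rw [hveq, Int.natAbs_mul, Int.natAbs_pow]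
    rfl
  have hu_odd : Odd u := by
    apply odd_of_odd_pow (n := 2) (by norm_num)
    rw [h]
    obtain ⟨a, ha⟩ := hso
    obtain ⟨c, hc⟩ := hve
    subst ha; subst hc
    exact ⟨8*a^4 + 16*a^3 + 12*a^2 + 4*a + 588*(2*a+1)^2*c^2 - 2744*c^4, by ring⟩
  have hC_odd : Odd (s^2 + 147*v^2) := by
    obtain ⟨a, ha⟩ := hso
    obtain ⟨c, hc⟩ := hve
    subst ha; subst hc
    exact ⟨2*a^2 + 2*a + 294*c^2, by ring⟩
  have hu0 : Odd |u| := odd_abs hu_odd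
  have key : (s^2 + 147*v^2 - |u|) * (s^2 + 147*v^2 + |u|) = 21952 * v^4 := by
    linear_combination -(sq_abs u) - h
  have hprod : (0:ℤ) < 21952*v^4 :=
    lt_of_le_of_ne (by positivity) (Ne.symm (mul_ne_zero (by norm_num) (pow_ne_zero _ hv0)))
  obtain ⟨hA, hB⟩ := both_pos key hprod (by linarith [abs_nonneg u, sq_nonneg s, sq_nonneg v])
  obtain ⟨a₁, ha₁⟩ := hC_odd.sub_odd hu0
  obtain ⟨b₁, hb₁⟩ := hC_odd.add_odd hu0
  have ha₁pos : 0 < a₁ := by linarith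
  have hb₁pos : 0 < b₁ := by linarith
  have hsum : a₁ + b₁ = s^2 + 147*v^2 := by linarith
  have hprod1 : a₁ * b₁ = 5488*v^4 := by
    rw [ha₁, hb₁] at key
    have h4 : (4:ℤ) * (a₁*b₁) = 4 * (5488*v^4) := by linear_combination key
    exact mul_left_cancel₀ (by norm_num) h4
  have e1 : ((2:ℤ)^(K+1))^4 = 2^(4*K+4) := by
    rw [← pow_mul]
    congr 1
    ring
  have h58 : (2:ℤ)^(4*K+8) = 16 * 2^(4*K+4) := by
    rw [show 4*K+8 = 4 + (4*K+4) by ring, pow_add]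
    norm_num
  have claim : ∀ a b : ℤ, 0 < a → 0 < b → Odd a → a + b = s^2 + 147*v^2 →
      a * b = 5488*v^4 → False := by
    intro a b hapos hbpos haodd hab hprod2
    have hcop_ab : IsCoprime a b := by
      apply coprime_of_prime (ne_of_gt hapos)
      intro p hp h1 h2
      have hp2 : p ≠ 2 := prime_ne_two_of_dvd_odd hp haodd h1
      have hpz : Prime (p:ℤ) := Nat.prime_iff_prime_int.mp hp
      have hdC : (p:ℤ) ∣ s^2 + 147*v^2 := hab ▸ dvd_add h1 h2
      have hdprod : (p:ℤ) ∣ 2^4*(343*v^4) := by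
        rw [show (2:ℤ)^4*(343*v^4) = 5488*v^4 by ring, ← hprod2]
        exact h1.mul_right _
      have hd343v : (p:ℤ) ∣ 343*v^4 := odd_prime_dvd_unpow hp hp2 4 hdprod
      rcases hpz.dvd_mul.mp hd343v with h343|hv4
      · have hp7 : p = 7 := eq_seven_of_dvd_343 hp h343
        subst hp7
        apply h7s
        apply prime7.dvd_of_dvd_pow (n := 2)
        have hd : (7:ℤ) ∣ (s^2 + 147*v^2) - 147*v^2 := dvd_sub hdC ⟨21*v^2, by ring⟩
        rw [show (s^2+147*v^2) - 147*v^2 = s^2 by ring] at hd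
        exact hd
      · have hpv : (p:ℤ) ∣ v := hpz.dvd_of_dvd_pow hv4
        have hps : (p:ℤ) ∣ s := by
          apply hpz.dvd_of_dvd_pow (n := 2)
          have hd : (p:ℤ) ∣ (s^2 + 147*v^2) - 147*v^2 :=
            dvd_sub hdC ((dvd_pow hpv (by norm_num)).mul_left 147)
          rw [show (s^2+147*v^2) - 147*v^2 = s^2 by ring] at hd
          exact hd
        exact not_isUnit_int_prime hp (hcop.isUnit_of_dvd' hps hpv)
    rw [hveq] at hab hprod2
    have hbig : ((2:ℤ)^(4*K+8)) ∣ b := by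
      apply (isCoprime_pow_two_odd (4*K+8) haodd).dvd_of_dvd_mul_left
      exact ⟨343*v₁^4, by linear_combination hprod2 + 5488*v₁^4*e1 + 343*v₁^4*h58⟩
    obtain ⟨Y, hY⟩ := hbig
    have hpowpos : (0:ℤ) < 2^(4*K+8) := by positivity
    have hYpos : 0 < Y := by
      have hb' : (0:ℤ) < 2^(4*K+8)*Y := hY ▸ hbpos
      rcases lt_trichotomy Y 0 with h'|h'|h'
      · have := mul_neg_of_pos_of_neg hpowpos h'
        linarith
      · rw [h'] at hb'; simp at hb'
      · exact h'
    have hprodY : a * Y = 343*v₁^4 := by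
      have hc : ((2:ℤ)^(4*K+8)) * (a*Y) = (2:ℤ)^(4*K+8) * (343*v₁^4) := by
        linear_combination hprod2 - a*hY + 5488*v₁^4*e1 + 343*v₁^4*h58
      exact mul_left_cancel₀ (ne_of_gt hpowpos) hc
    have hcop_aY : IsCoprime a Y :=
      hcop_ab.of_isCoprime_of_dvd_right ⟨2^(4*K+8), by rw [hY]; ring⟩
    have hYodd : Odd Y := by
      have hmul : Odd (a*Y) := by
        rw [hprodY]; exact (by decide : Odd (343:ℤ)).mul hv₁odd.pow
      exact (Int.odd_mul.mp hmul).2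
    obtain ⟨e, f', hef, hcase⟩ := factor343 hapos hYpos hv₁0 hcop_aY hprodY
    have hnat : e.natAbs^2 * f'.natAbs^2 = v₁.natAbs^2 := by
      have := congrArg Int.natAbs hef
      simpa [Int.natAbs_mul, Int.natAbs_pow] using this
    rcases hcase with ⟨hae, hYf⟩ | ⟨hae, hYf⟩
    · -- a = e⁴, Y = 343 f'⁴ : T2even descent
      have he : Odd e := odd_of_odd_pow (by norm_num) (hae ▸ haodd)
      have hf' : Odd f' := odd_of_odd_pow (by norm_num) (Int.odd_mul.mp (hYf ▸ hYodd)).2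
      have hcop_ef : IsCoprime e f' := by
        have h1 : IsCoprime (e^4) (343*f'^4) := by rw [← hae, ← hYf]; exact hcop_aY
        exact (h1.of_isCoprime_of_dvd_left ⟨e^3, by ring⟩).of_isCoprime_of_dvd_right
          ⟨343*f'^3, by ring⟩
      have hcop_e : IsCoprime e (2^(K+1)*f') :=
        IsCoprime.mul_right ((isCoprime_pow_two_odd (K+1) he).symm) hcop_ef
      have heq' : s^2 = e^4 - 147*e^2*(2^(K+1)*f')^2 + 5488*(2^(K+1)*f')^4 := by
        linear_combination -hab + hae + hY + (2:ℤ)^(4*K+8)*hYf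
          + 147*((2:ℤ)^(K+1))^2*hef + 343*f'^4*h58 - 5488*f'^4*e1
      obtain ⟨u', s', g, hcop', hg0, hlt, heq''⟩ := T2even K hf' he hcop_e heq'
      have hfle : f'.natAbs ≤ v₁.natAbs := by
        have he1' : 1 ≤ e.natAbs^2 := Nat.one_le_iff_ne_zero.mpr
          (pow_ne_zero _ (Int.natAbs_ne_zero.mpr (odd_ne_zero he)))
        have h1 : f'.natAbs^2 ≤ v₁.natAbs^2 := by
          calc f'.natAbs^2 = 1 * f'.natAbs^2 := (one_mul _).symm
          _ ≤ e.natAbs^2 * f'.natAbs^2 := Nat.mul_le_mul_right _ he1'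
          _ = v₁.natAbs^2 := hnat
        exact (Nat.pow_le_pow_iff_left (by norm_num)).mp h1
      have habs2 : (2^(K+1)*f' : ℤ).natAbs = 2^(K+1) * f'.natAbs := by
        rw [Int.natAbs_mul, Int.natAbs_pow]
        rfl
      have hltN : g.natAbs < N := by
        have h1 : (2^(K+1)*f' : ℤ).natAbs ≤ v.natAbs := by
          rw [habs2, hvabs]
          exact Nat.mul_le_mul_left _ hfle
        omega
      exact hg0 (IH g.natAbs hltN u' s' g le_rfl hcop' heq'')
    · -- a = 343e⁴, Y = f'⁴ : dead mod 8
      have he : Odd e := odd_of_odd_pow (by norm_num) (Int.odd_mul.mp (hae ▸ haodd)).2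
      have heq2 : s^2 = 343*e^4 - 147*e^2*(2*(2^K*f'))^2 + 16*(2*(2^K*f'))^4 := by
        have hps : (2:ℤ)^(K+1) = 2*2^K := by rw [pow_succ]; ring
        rw [show (2:ℤ)*(2^K*f') = 2^(K+1)*f' by rw [hps]; ring]
        linear_combination -hab + hae + hY + (2:ℤ)^(4*K+8)*hYf
          + 147*((2:ℤ)^(K+1))^2*hef + f'^4*h58 - 16*f'^4*e1
      obtain ⟨i, hi⟩ := hso
      obtain ⟨a', ha'⟩ := he
      rw [hi, ha'] at heq2
      have hc8 := congrArg (fun n : ℤ => (n : ZMod 8)) heq2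
      push_cast at hc8
      exact dec8D2 (i : ZMod 8) (a' : ZMod 8) ((2:ZMod 8)^K*(f' : ZMod 8))
        (by linear_combination hc8)
  rcases Int.even_or_odd a₁ with ha|ha
  · have hb : Odd b₁ := by
      rcases Int.even_or_odd b₁ with hb'|hb'
      · exfalso
        have heven : Even (a₁+b₁) := ha.add hb'
        rw [hsum] at heven
        exact (Int.not_odd_iff_even.mpr heven) hC_odd
      · exact hb'
    exact claim b₁ a₁ hb₁pos ha₁pos hb (by linarith) (by linear_combination hprod1)
  · exact claim a₁ b₁ ha₁pos hb₁pos ha hsum hprod1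

/-! ### Rational squares that are integers -/

lemma rat_int_of_sq {q : ℚ} {n : ℤ} (h : q^2 = (n:ℚ)) : ∃ w : ℤ, (w:ℚ) = q := by
  have hden : (q^2).den = 1 := by rw [h]; exact Rat.den_intCast n
  rw [Rat.den_pow] at hden
  have hd1 : q.den = 1 := by
    have hpos := q.den_pos
    nlinarith [hden]
  exact ⟨q.num, (Rat.den_eq_one_iff q).mp hd1⟩

end FLT7Aux

open FLT7Aux in
/-- The key quartic in the elementary proofs of FLT for exponent 7:
`7u² = 7s⁴ + 42s²t² − t⁴` forces `t = 0` over the rationals. -/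
theorem flt7_quartic (u s t : ℚ)
    (h : 7 * u ^ 2 = 7 * s ^ 4 + 42 * s ^ 2 * t ^ 2 - t ^ 4) :
    t = 0 := by
  have hsden : ((s.den:ℚ)) ≠ 0 := Nat.cast_ne_zero.mpr s.den_ne_zero
  have htden : ((t.den:ℚ)) ≠ 0 := Nat.cast_ne_zero.mpr t.den_ne_zero
  have hs : s * (s.den:ℚ) = (s.num:ℚ) := (eq_div_iff hsden).mp (Rat.num_div_den s).symm
  have ht : t * (t.den:ℚ) = (t.num:ℚ) := (eq_div_iff htden).mp (Rat.num_div_den t).symm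
  obtain ⟨A, hA⟩ : ∃ A : ℤ, (A:ℚ) = s * ((s.den:ℚ)*(t.den:ℚ)) :=
    ⟨s.num * t.den, by push_cast; rw [← hs]; ring⟩
  obtain ⟨B, hB, hBt⟩ : ∃ B : ℤ, (B:ℚ) = t * ((s.den:ℚ)*(t.den:ℚ)) ∧ (B = 0 → t = 0) := by
    refine ⟨t.num * s.den, by push_cast; rw [← ht]; ring, fun h0 => ?_⟩
    rcases mul_eq_zero.mp h0 with h1|h1
    · exact Rat.num_eq_zero.mp h1
    · exfalso
      have : ((s.den:ℤ)) ≠ 0 := by exact_mod_cast s.den_ne_zero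
      exact this h1
  have key : (7*(u*((s.den:ℚ)*(t.den:ℚ))^2))^2
      = ((7*(7*A^4 + 42*A^2*B^2 - B^4) : ℤ) : ℚ) := by
    push_cast
    rw [hA, hB]
    linear_combination (7*((s.den:ℚ)*(t.den:ℚ))^4) * h
  obtain ⟨w, hw⟩ := rat_int_of_sq key
  have hw2 : w^2 = 7*(7*A^4 + 42*A^2*B^2 - B^4) := by
    have hcast : ((w^2 : ℤ):ℚ) = ((7*(7*A^4+42*A^2*B^2-B^4) : ℤ):ℚ) := by
      push_cast
      rw [hw]
      have key' := key
      push_cast at key'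
      linear_combination key'
    exact_mod_cast hcast
  have h7w : (7:ℤ) ∣ w :=
    prime7.dvd_of_dvd_pow (n := 2) ⟨7*A^4+42*A^2*B^2-B^4, hw2⟩
  obtain ⟨w1, rfl⟩ := h7w
  have hw3 : 7*w1^2 = 7*A^4 + 42*A^2*B^2 - B^4 :=
    mul_left_cancel₀ (show (7:ℤ) ≠ 0 by norm_num) (by linear_combination hw2)
  have h7B : (7:ℤ) ∣ B := by
    apply prime7.dvd_of_dvd_pow (n := 4)
    exact ⟨A^4 + 6*A^2*B^2 - w1^2, by linear_combination hw3⟩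
  obtain ⟨B₁, rfl⟩ := h7B
  have hw4 : w1^2 = A^4 + 294*A^2*B₁^2 - 343*B₁^4 :=
    mul_left_cancel₀ (show (7:ℤ) ≠ 0 by norm_num) (by linear_combination hw3)
  have hB₁ : B₁ = 0 := by
    by_contra hB0
    obtain ⟨g, hgdef⟩ : ∃ g : ℕ, g = Int.gcd A B₁ := ⟨_, rfl⟩
    have hg0 : g ≠ 0 := by
      rw [hgdef]
      exact fun hg => hB0 (Int.gcd_eq_zero_iff.mp hg).2
    have hgZ : ((g : ℤ)) ≠ 0 := by exact_mod_cast hg0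
    obtain ⟨A₂, hA₂⟩ : ((g : ℤ)) ∣ A := by rw [hgdef]; exact Int.gcd_dvd_left _ _
    obtain ⟨B₂, hB₂⟩ : ((g : ℤ)) ∣ B₁ := by rw [hgdef]; exact Int.gcd_dvd_right _ _
    have hcop2 : IsCoprime A₂ B₂ := by
      rw [Int.isCoprime_iff_gcd_eq_one]
      have hgpos : 0 < Int.gcd A B₁ := by
        rw [← hgdef]; exact Nat.pos_of_ne_zero hg0
      have hdiv := Int.gcd_div_gcd_div_gcd hgpos
      rw [← hgdef] at hdiv
      have hA2' : A / (g : ℤ) = A₂ := by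
        rw [hA₂]; exact Int.mul_ediv_cancel_left _ hgZ
      have hB2' : B₁ / (g : ℤ) = B₂ := by
        rw [hB₂]; exact Int.mul_ediv_cancel_left _ hgZ
      rw [hA2', hB2'] at hdiv
      exact hdiv
    rw [hA₂, hB₂] at hw4
    have hg2 : ((g : ℤ))^2 ∣ w1 := by
      apply (Int.pow_dvd_pow_iff (two_ne_zero)).mp
      exact ⟨A₂^4 + 294*A₂^2*B₂^2 - 343*B₂^4, by linear_combination hw4⟩
    obtain ⟨w2, hw5⟩ := hg2
    rw [hw5] at hw4
    have heq : w2^2 = A₂^4 + 294*A₂^2*B₂^2 - 343*B₂^4 := by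
      have hc : ((g : ℤ))^4 * w2^2
          = ((g : ℤ))^4 * (A₂^4 + 294*A₂^2*B₂^2 - 343*B₂^4) := by
        linear_combination hw4
      exact mul_left_cancel₀ (pow_ne_zero 4 hgZ) hc
    have hB₂0 := T1rec B₂.natAbs w2 A₂ B₂ le_rfl hcop2 heq
    exact hB0 (by rw [hB₂, hB₂0, mul_zero])
  exact hBt (by rw [hB₁, mul_zero])
end
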